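/- arXiv:1905.04382 — 7 statements merged into one kernel-verified Lean document; each statement's English description precedes it below -/
import Mathlib

section
/- Any optimal solution λ* of the dual problem min_{λ ∈ ℝ^m_+} q(λ) satisfies 0 ≤ λ*^j ≤ B for every link j = 1,…,m. -/
open Finset MeasureTheory ProbabilityTheory Real

lemma quad_bound (B c ε : ℝ) (hB : 0 < B) (hc : 0 < c) (hε : 0 < ε)
    (f : ℝ → ℝ) (hf : ContDiffOn ℝ 2 f (Set.Ioi (-ε))) (hf0 : f 0 = 0)
    (hf' : deriv f 0 ≤ B) (hf'' : ∀ x : ℝ, 0 ≤ x → c ≤ -(deriv (deriv f) x)) :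
    ∀ x : ℝ, 0 ≤ x → f x ≤ B * x - c / 2 * x ^ 2 := by
  have hfo : IsOpen (Set.Ioi (-ε)) := isOpen_Ioi
  have hsub : Set.Ici (0:ℝ) ⊆ Set.Ioi (-ε) := fun t ht =>
    lt_of_lt_of_le (by linarith : -ε < 0) ht
  have hdiff : ∀ t ∈ Set.Ioi (-ε), DifferentiableAt ℝ f t := fun t ht =>
    ((hf.differentiableOn (by norm_num)) t ht).differentiableAt (hfo.mem_nhds ht)
  have hdf : ContDiffOn ℝ 1 (deriv f) (Set.Ioi (-ε)) := by
    exact hf.deriv_of_isOpen hfo (by norm_num : (1:WithTop ℕ∞)+1 ≤ 2)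
  have hdiff' : ∀ t ∈ Set.Ioi (-ε), DifferentiableAt ℝ (deriv f) t := fun t ht =>
    ((hdf.differentiableOn (by norm_num)) t ht).differentiableAt (hfo.mem_nhds ht)
  -- step 1: deriv f t + c * t is antitone on Ici 0
  have hanti1 : AntitoneOn (fun t => deriv f t + c * t) (Set.Ici 0) := by
    apply antitoneOn_of_deriv_nonpos (convex_Ici 0)
    · exact ((hdf.continuousOn.mono hsub).add (continuous_const.mul continuous_id).continuousOn)
    · rw [interior_Ici]
      intro t ht
      exact ((hdiff' t (hsub (Set.mem_Ici.mpr (le_of_lt ht)))).add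
        ((hasDerivAt_id t).const_mul c).differentiableAt).differentiableWithinAt
    · rw [interior_Ici]
      intro t ht
      have hd : HasDerivAt (fun s => deriv f s + c * s)
          (deriv (deriv f) t + c * 1) t :=
        ((hdiff' t (hsub (Set.mem_Ici.mpr (le_of_lt ht)))).hasDerivAt).add ((hasDerivAt_id t).const_mul c)
      rw [hd.deriv]
      have := hf'' t (le_of_lt ht)
      linarith
  -- step 2: g = f t - (B t - c/2 t^2) is antitone on Ici 0
  have hanti2 : AntitoneOn (fun t => f t - (B * t - c / 2 * t ^ 2)) (Set.Ici 0) := by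
    apply antitoneOn_of_deriv_nonpos (convex_Ici 0)
    · exact ((hf.continuousOn.mono hsub).sub (by fun_prop))
    · rw [interior_Ici]
      intro t ht
      exact ((hdiff t (hsub (Set.mem_Ici.mpr (le_of_lt ht)))).sub (by fun_prop)).differentiableWithinAt
    · rw [interior_Ici]
      intro t ht
      have hd : HasDerivAt (fun s => f s - (B * s - c / 2 * s ^ 2))
          (deriv f t - (B * 1 - c / 2 * (2 * t ^ 1))) t := by
        exact (hdiff t (hsub (Set.mem_Ici.mpr (le_of_lt ht)))).hasDerivAt.sub
          (((hasDerivAt_id t).const_mul B).sub ((hasDerivAt_pow 2 t).const_mul (c/2)))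
      rw [hd.deriv]
      have h1 : deriv f t + c * t ≤ deriv f 0 + c * 0 :=
        hanti1 (Set.mem_Ici.mpr (le_refl 0)) (Set.mem_Ici.mpr (le_of_lt ht)) (le_of_lt ht)
      simp at h1
      nlinarith
  intro x hx
  have := hanti2 (Set.mem_Ici.mpr (le_refl 0)) (Set.mem_Ici.mpr hx) hx
  simp [hf0] at this
  linarith

theorem stmt0
    (m N : ℕ) (hm : 0 < m) (hN : 0 < N)
    (R : Fin m → Fin N → ℝ)
    (hR01 : ∀ j i, R j i = 0 ∨ R j i = 1)
    (hRcol : ∀ i, ∃ j, R j i = 1)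
    (b : Fin m → ℝ) (hb : ∀ j, 0 < b j)
    (B σ ε : ℝ) (hB : 0 < B) (hσ : 0 < σ) (hε : 0 < ε)
    (u : Fin N → ℝ → ℝ)
    (hu_smooth : ∀ i, ContDiffOn ℝ 2 (u i) (Set.Ioi (-ε)))
    (hu0 : ∀ i, u i 0 = 0)
    (hu'pos : ∀ i, 0 < deriv (u i) 0)
    (hu'le : ∀ i, deriv (u i) 0 ≤ B)
    (hu'' : ∀ i, ∀ x : ℝ, 0 ≤ x → (N : ℝ) * σ ≤ -(deriv (deriv (u i)) x))
    (hRrow : ∀ j, ∃ i, R j i = 1)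
    (q : (Fin m → ℝ) → ℝ)
    (hq : ∀ lam : Fin m → ℝ, q lam = sSup ((fun x : Fin N → ℝ =>
      (∑ i, u i (x i)) + ∑ j, lam j * (b j - ∑ i, R j i * x i)) ''
      {x : Fin N → ℝ | ∀ i, 0 ≤ x i}))
    (lamStar : Fin m → ℝ) (hlamStar0 : ∀ j, 0 ≤ lamStar j)
    (hlamStarOpt : ∀ lam : Fin m → ℝ, (∀ j, 0 ≤ lam j) → q lamStar ≤ q lam)
    : ∀ j, 0 ≤ lamStar j ∧ lamStar j ≤ B := by
  have hNσ : 0 < (N : ℝ) * σ := by positivity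
  -- quadratic bound on utilities
  have hub : ∀ i, ∀ x : ℝ, 0 ≤ x → u i x ≤ B * x - ((N:ℝ)*σ) / 2 * x ^ 2 :=
    fun i => quad_bound B ((N:ℝ)*σ) ε hB hNσ hε (u i) (hu_smooth i) (hu0 i)
      (hu'le i) (hu'' i)
  have hubB : ∀ i, ∀ x : ℝ, 0 ≤ x → u i x ≤ B * x := by
    intro i x hx
    have := hub i x hx
    nlinarith [sq_nonneg x]
  -- the objective function, rewritten
  set F : (Fin m → ℝ) → (Fin N → ℝ) → ℝ := fun lam x =>
    (∑ i, u i (x i)) + ∑ j, lam j * (b j - ∑ i, R j i * x i) with hF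
  have hFeq : ∀ lam x, F lam x =
      (∑ i, u i (x i)) + (∑ j, lam j * b j) - ∑ i, (∑ j, lam j * R j i) * x i := by
    intro lam x
    have h : (∑ j, lam j * (b j - ∑ i, R j i * x i)) =
        (∑ j, lam j * b j) - ∑ i, (∑ j, lam j * R j i) * x i := by
      simp only [mul_sub, Finset.sum_sub_distrib, Finset.mul_sum, Finset.sum_mul]
      congr 1
      rw [Finset.sum_comm]
      exact Finset.sum_congr rfl (fun i _ => Finset.sum_congr rfl (fun j _ => by ring))
    rw [hF]
    dsimp only
    rw [h]
    ring
  set S : Set (Fin N → ℝ) := {x : Fin N → ℝ | ∀ i, 0 ≤ x i} with hS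
  have h0S : (fun _ => (0:ℝ)) ∈ S := fun i => le_refl 0
  -- boundedness above of the image set, for any nonneg lam
  have hbddgen : ∀ lam : Fin m → ℝ, (∀ j, 0 ≤ lam j) → ∀ x ∈ S,
      F lam x ≤ (∑ j, lam j * b j) + N * (B ^ 2 / (2 * ((N:ℝ) * σ))) := by
    intro lam hlam x hx
    rw [hFeq]
    have h1 : (∑ i, u i (x i)) ≤ ∑ i : Fin N, B ^ 2 / (2 * ((N:ℝ) * σ)) := by
      apply Finset.sum_le_sum
      intro i _
      have h2 := hub i (x i) (hx i)
      have h4 : B * x i - ((N:ℝ)*σ) / 2 * x i ^ 2 ≤ B ^ 2 / (2 * ((N:ℝ) * σ)) := by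
        rw [le_div_iff₀ (by positivity)]
        nlinarith [sq_nonneg ((N:ℝ)*σ * x i - B)]
      linarith
    have h3 : (0:ℝ) ≤ ∑ i, (∑ j, lam j * R j i) * x i := by
      apply Finset.sum_nonneg
      intro i _
      apply mul_nonneg _ (hx i)
      apply Finset.sum_nonneg
      intro j _
      rcases hR01 j i with h | h <;> simp [h, hlam j]
    simp only [Finset.sum_const, Finset.card_univ, Fintype.card_fin, nsmul_eq_mul] at h1
    linarith
  intro j0
  refine ⟨hlamStar0 j0, ?_⟩
  by_contra hcon
  push_neg at hcon
  set lam' : Fin m → ℝ := Function.update lamStar j0 B with hlam'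
  have hlam'0 : ∀ j, 0 ≤ lam' j := by
    intro j
    rw [hlam']
    rcases eq_or_ne j j0 with rfl | hne
    · simp [hB.le]
    · simp [Function.update_of_ne hne, hlamStar0 j]
  set δ : ℝ := (lamStar j0 - B) * b j0 with hδ
  have hδpos : 0 < δ := by
    apply mul_pos (by linarith) (hb j0)
  have hBdd : BddAbove (F lamStar '' S) := by
    refine ⟨(∑ j, lamStar j * b j) + N * (B ^ 2 / (2 * ((N:ℝ) * σ))), ?_⟩
    rintro y ⟨x, hx, rfl⟩
    exact hbddgen lamStar hlamStar0 x hx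
  -- key inequality
  have hkey : ∀ x ∈ S, F lam' x ≤ q lamStar - δ := by
    intro x hx
    set x' : Fin N → ℝ := fun i => if R j0 i = 1 then 0 else x i with hx'
    have hx'S : x' ∈ S := by
      intro i
      rw [hx']
      dsimp only
      split
      · exact le_refl 0
      · exact hx i
    have hstep : F lam' x ≤ F lamStar x' - δ := by
      rw [hFeq, hFeq]
      have hsumb : (∑ j, lamStar j * b j) - (∑ j, lam' j * b j) = δ := by
        rw [hδ, ← Finset.sum_sub_distrib]
        rw [Finset.sum_eq_single j0]
        · rw [hlam']; simp; ring
        · intro j _ hne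
          rw [hlam', Function.update_of_ne hne]; ring
        · simp
      have hterm : ∀ i : Fin N,
          u i (x i) - (∑ j, lam' j * R j i) * x i ≤
          u i (x' i) - (∑ j, lamStar j * R j i) * x' i := by
        intro i
        rcases hR01 j0 i with h | h
        · -- user i not on link j0: everything equal
          have hx'i : x' i = x i := by rw [hx']; simp [h]
          have hp : (∑ j, lam' j * R j i) = ∑ j, lamStar j * R j i := by
            apply Finset.sum_congr rfl
            intro j _
            rcases eq_or_ne j j0 with rfl | hne
            · rw [h]; ring
            · rw [hlam', Function.update_of_ne hne]
          rw [hx'i, hp]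
        · -- user i on link j0: price ≥ B
          have hx'i : x' i = 0 := by rw [hx']; simp [h]
          have hp : B ≤ ∑ j, lam' j * R j i := by
            have : lam' j0 * R j0 i = B := by rw [hlam']; simp [h]
            rw [← this]
            apply Finset.single_le_sum (f := fun j => lam' j * R j i) _ (Finset.mem_univ j0)
            intro j _
            apply mul_nonneg (hlam'0 j)
            rcases hR01 j i with h' | h' <;> simp [h']
          have hui := hubB i (x i) (hx i)
          rw [hx'i, hu0 i]
          have : (∑ j, lam' j * R j i) * x i ≥ B * x i :=
            mul_le_mul_of_nonneg_right hp (hx i)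
          simp
          linarith
      have hsum : (∑ i, u i (x i)) - (∑ i, (∑ j, lam' j * R j i) * x i) ≤
          (∑ i, u i (x' i)) - (∑ i, (∑ j, lamStar j * R j i) * x' i) := by
        rw [← Finset.sum_sub_distrib, ← Finset.sum_sub_distrib]
        exact Finset.sum_le_sum (fun i _ => hterm i)
      linarith
    have hle : F lamStar x' ≤ q lamStar := by
      rw [hq lamStar]
      exact le_csSup hBdd ⟨x', hx'S, rfl⟩
    linarith
  have h2 : q lam' ≤ q lamStar - δ := by
    rw [hq lam']
    apply csSup_le (Set.Nonempty.image _ ⟨_, h0S⟩)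
    rintro y ⟨x, hx, rfl⟩
    exact hkey x hx
  have h1 : q lamStar ≤ q lam' := hlamStarOpt lam' hlam'0
  linarith
end

section
/- For every λ ∈ [0,B]^m and every j = 1,…,m, the partial derivative of the dual objective satisfies |∂q(λ)/∂λ^j| ≤ max{ b^j, B/σ − b^j }. -/
open Finset MeasureTheory ProbabilityTheory Real

theorem stmt1
    (m N : ℕ) (hm : 0 < m) (hN : 0 < N)
    (R : Fin m → Fin N → ℝ)
    (hR01 : ∀ j i, R j i = 0 ∨ R j i = 1)
    (hRcol : ∀ i, ∃ j, R j i = 1)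
    (b : Fin m → ℝ) (hb : ∀ j, 0 < b j)
    (B σ ε : ℝ) (hB : 0 < B) (hσ : 0 < σ) (hε : 0 < ε)
    (u : Fin N → ℝ → ℝ)
    (hu_smooth : ∀ i, ContDiffOn ℝ 2 (u i) (Set.Ioi (-ε)))
    (hu0 : ∀ i, u i 0 = 0)
    (hu'pos : ∀ i, 0 < deriv (u i) 0)
    (hu'le : ∀ i, deriv (u i) 0 ≤ B)
    (hu'' : ∀ i, ∀ x : ℝ, 0 ≤ x → (N : ℝ) * σ ≤ -(deriv (deriv (u i)) x))
    (xbar : (Fin m → ℝ) → Fin N → ℝ)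
    (hxbar : ∀ lam : Fin m → ℝ, (∀ j, 0 ≤ lam j) → ∀ i : Fin N,
      0 ≤ xbar lam i ∧
      IsMaxOn (fun x : ℝ => u i x - (∑ j, lam j * R j i) * x) (Set.Ici 0) (xbar lam i) ∧
      ∀ y : ℝ, 0 ≤ y →
        IsMaxOn (fun x : ℝ => u i x - (∑ j, lam j * R j i) * x) (Set.Ici 0) y →
        y = xbar lam i)
    (q : (Fin m → ℝ) → ℝ)
    (hq : ∀ lam : Fin m → ℝ, q lam = sSup ((fun x : Fin N → ℝ =>
      (∑ i, u i (x i)) + ∑ j, lam j * (b j - ∑ i, R j i * x i)) ''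
      {x : Fin N → ℝ | ∀ i, 0 ≤ x i}))
    (hq' : ∀ lam : Fin m → ℝ, (∀ j, lam j ∈ Set.Icc (0 : ℝ) B) → ∀ j : Fin m,
      HasDerivWithinAt (fun t : ℝ => q (Function.update lam j t))
        (b j - ∑ i, R j i * xbar lam i) (Set.Icc 0 B) (lam j))
    : ∀ lam : Fin m → ℝ, (∀ j, lam j ∈ Set.Icc (0 : ℝ) B) → ∀ j : Fin m, ∀ d : ℝ,
      HasDerivWithinAt (fun t : ℝ => q (Function.update lam j t)) d (Set.Icc 0 B) (lam j) →
      |d| ≤ max (b j) (B / σ - b j) := by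
  intro lam hlam j d hd
  have hlam0 : ∀ k, 0 ≤ lam k := fun k => (hlam k).1
  have hud : UniqueDiffWithinAt ℝ (Set.Icc (0:ℝ) B) (lam j) :=
    (uniqueDiffOn_Icc hB) _ (hlam j)
  have hdeq : d = b j - ∑ i, R j i * xbar lam i := by
    have h1 := (hq' lam hlam j).derivWithin hud
    have h2 := hd.derivWithin hud
    rw [← h1, ← h2]
  have hNpos : (0:ℝ) < N := by exact_mod_cast hN
  set M : ℝ := B / ((N:ℝ) * σ) with hM
  have hMpos : 0 < M := div_pos hB (mul_pos hNpos hσ)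
  have hxle : ∀ i, xbar lam i ≤ M := by
    intro i
    by_contra hlt
    push_neg at hlt
    obtain ⟨hx0, hmax, -⟩ := hxbar lam hlam0 i
    have hc : 0 ≤ ∑ k, lam k * R k i :=
      Finset.sum_nonneg fun k _ => mul_nonneg (hlam0 k)
        (by rcases hR01 k i with h | h <;> simp [h])
    have hdiff : ∀ x : ℝ, -ε < x → HasDerivAt (u i) (deriv (u i) x) x := fun x hx =>
      (((hu_smooth i).differentiableOn (by norm_num)).differentiableAt
        (isOpen_Ioi.mem_nhds hx)).hasDerivAt
    have hder : ContDiffOn ℝ 1 (deriv (u i)) (Set.Ioi (-ε)) :=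
      (hu_smooth i).deriv_of_isOpen isOpen_Ioi (by norm_num)
    have hdiff2 : ∀ x : ℝ, -ε < x → HasDerivAt (deriv (u i)) (deriv (deriv (u i)) x) x :=
      fun x hx => ((hder.differentiableOn (by norm_num)).differentiableAt
        (isOpen_Ioi.mem_nhds hx)).hasDerivAt
    have hmem : ∀ x : ℝ, 0 ≤ x → -ε < x := fun x hx => by linarith
    -- MVT on [M, xbar]
    obtain ⟨ξ, hξ, hξeq⟩ := exists_hasDerivAt_eq_slope (u i) (deriv (u i)) hlt
      (fun x hx => (hdiff x (hmem x (le_trans hMpos.le hx.1))).continuousAt.continuousWithinAt)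
      (fun x hx => hdiff x (hmem x (le_trans hMpos.le hx.1.le)))
    -- MVT on [0, ξ]
    have hξpos : 0 < ξ := lt_trans hMpos hξ.1
    obtain ⟨η, hη, hηeq⟩ := exists_hasDerivAt_eq_slope (deriv (u i)) (deriv (deriv (u i))) hξpos
      (fun x hx => (hdiff2 x (hmem x hx.1)).continuousAt.continuousWithinAt)
      (fun x hx => hdiff2 x (hmem x hx.1.le))
    have hη'' := hu'' i η hη.1.le
    have hu'0 := hu'le i
    -- deriv u i ξ < 0
    have hξ' : deriv (u i) ξ < 0 := by
      have : deriv (u i) ξ = deriv (u i) 0 + deriv (deriv (u i)) η * ξ := by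
        rw [hηeq, sub_zero, div_mul_cancel₀ _ hξpos.ne']; ring
      have hNσξ : B < (N:ℝ) * σ * ξ := by
        have : M * ((N:ℝ)*σ) = B := by rw [hM, div_mul_cancel₀ _ (mul_pos hNpos hσ).ne']
        nlinarith [hξ.1, mul_pos hNpos hσ]
      nlinarith
    -- contradiction with maximality
    have hmaxM := hmax (Set.mem_Ici.2 hMpos.le)
    simp only [Set.mem_setOf_eq] at hmaxM
    have hslope : u i (xbar lam i) - u i M = deriv (u i) ξ * (xbar lam i - M) := by
      rw [hξeq, div_mul_cancel₀ _ (sub_ne_zero.mpr hlt.ne')]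
    nlinarith [hmaxM, hξ', hlt, hc, hξ.1]
  set S : ℝ := ∑ i, R j i * xbar lam i with hS
  have hS0 : 0 ≤ S := Finset.sum_nonneg fun i _ => mul_nonneg
    (by rcases hR01 j i with h | h <;> simp [h]) (hxbar lam hlam0 i).1
  have hSle : S ≤ B / σ := by
    have h1 : S ≤ ∑ _i : Fin N, M := by
      apply Finset.sum_le_sum
      intro i _
      rcases hR01 j i with h | h
      · simp [h, hMpos.le]
      · simpa [h] using hxle i
    have h2 : ∑ _i : Fin N, M = B / σ := by
      rw [Finset.sum_const, Finset.card_univ, Fintype.card_fin, nsmul_eq_mul, hM]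
      field_simp
    linarith
  have h1 : b j ≤ max (b j) (B / σ - b j) := le_max_left _ _
  have h2 : B / σ - b j ≤ max (b j) (B / σ - b j) := le_max_right _ _
  rw [hdeq, abs_le]
  constructor <;> linarith
end

section
/- The dual objective q is differentiable on ℝ^m_+ (in the interior, with one-sided derivatives at the boundary) and its gradient is q'(λ) = b − Σ_{i=1}^N R_i x̄^i(λ) = b − R x̄(λ). -/
open Finset MeasureTheory ProbabilityTheory Real

/-- Strong concavity midpoint inequality from second derivative bound. -/
lemma strongMid (ε μ : ℝ) (hε : 0 < ε) (v : ℝ → ℝ)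
    (hv : ContDiffOn ℝ 2 v (Set.Ioi (-ε)))
    (hv'' : ∀ x : ℝ, 0 ≤ x → μ ≤ -(deriv (deriv v) x)) :
    ∀ x, 0 ≤ x → ∀ y, 0 ≤ y →
      (v x + v y) / 2 + μ / 8 * (x - y) ^ 2 ≤ v ((x + y) / 2) := by
  have hopen : IsOpen (Set.Ioi (-ε)) := isOpen_Ioi
  have hsub : Set.Ici (0:ℝ) ⊆ Set.Ioi (-ε) := fun x hx =>
    lt_of_lt_of_le (by linarith : -ε < 0) hx
  have hdv : ∀ x ∈ Set.Ioi (-ε), DifferentiableAt ℝ v x := fun x hx =>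
    (hv.contDiffAt (hopen.mem_nhds hx)).differentiableAt (by norm_num)
  have hd2' : ContDiffOn ℝ 1 (deriv v) (Set.Ioi (-ε)) :=
    hv.deriv_of_isOpen hopen (by norm_num)
  have hd2 : ∀ x ∈ Set.Ioi (-ε), DifferentiableAt ℝ (deriv v) x := fun x hx =>
    (hd2'.contDiffAt (hopen.mem_nhds hx)).differentiableAt one_ne_zero
  have hquad : ∀ x : ℝ, HasDerivAt (fun y : ℝ => μ / 2 * y ^ 2) (μ * x) x := by
    intro x
    have h := (hasDerivAt_pow 2 x).const_mul (μ / 2)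
    refine h.congr_deriv ?_
    push_cast; ring
  have hIoi : ∀ x : ℝ, 0 < x → x ∈ Set.Ioi (-ε) := fun x hx => hsub (le_of_lt hx)
  have hconc : ConcaveOn ℝ (Set.Ici (0:ℝ)) (fun y => v y + μ / 2 * y ^ 2) := by
    apply concaveOn_of_hasDerivWithinAt2_nonpos (convex_Ici 0)
      (f' := fun x => deriv v x + μ * x) (f'' := fun x => deriv (deriv v) x + μ)
    · exact (hv.continuousOn.mono hsub).add (by fun_prop)
    · intro x hx
      rw [interior_Ici] at hx
      exact (((hdv x (hIoi x hx)).hasDerivAt).add (hquad x)).hasDerivWithinAt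
    · intro x hx
      rw [interior_Ici] at hx
      have h1 : HasDerivAt (fun y : ℝ => μ * y) μ x := by
        simpa using (hasDerivAt_id x).const_mul μ
      exact (((hd2 x (hIoi x hx)).hasDerivAt).add h1).hasDerivWithinAt
    · intro x hx
      rw [interior_Ici] at hx
      have := hv'' x (le_of_lt hx)
      linarith
  intro x hx y hy
  have h := hconc.2 (Set.mem_Ici.mpr hx) (Set.mem_Ici.mpr hy)
    (by norm_num : (0:ℝ) ≤ 1/2) (by norm_num : (0:ℝ) ≤ 1/2) (by norm_num)
  simp only [smul_eq_mul] at h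
  have hmid : (1:ℝ)/2 * x + 1/2 * y = (x + y) / 2 := by ring
  rw [hmid] at h
  nlinarith [h]

/-- Quadratic gap at a maximizer of `v - a·x` over `[0,∞)`. -/
lemma quadGap (ε μ : ℝ) (hε : 0 < ε) (v : ℝ → ℝ)
    (hv : ContDiffOn ℝ 2 v (Set.Ioi (-ε)))
    (hv'' : ∀ x : ℝ, 0 ≤ x → μ ≤ -(deriv (deriv v) x))
    (a s t : ℝ) (hs : 0 ≤ s) (ht : 0 ≤ t)
    (hmax : IsMaxOn (fun x : ℝ => v x - a * x) (Set.Ici 0) s) :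
    v t - a * t ≤ v s - a * s - μ / 4 * (t - s) ^ 2 := by
  have hmid : (0:ℝ) ≤ (s + t) / 2 := by linarith
  have h1 := strongMid ε μ hε v hv hv'' s hs t ht
  have h2 : v ((s + t) / 2) - a * ((s + t) / 2) ≤ v s - a * s :=
    hmax (Set.mem_Ici.mpr hmid)
  nlinarith [h1, h2]

/-- Lipschitz estimate for maximizers. -/
lemma lipMax (ε μ : ℝ) (hε : 0 < ε) (hμ : 0 < μ) (v : ℝ → ℝ)
    (hv : ContDiffOn ℝ 2 v (Set.Ioi (-ε)))
    (hv'' : ∀ x : ℝ, 0 ≤ x → μ ≤ -(deriv (deriv v) x))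
    (a c s t : ℝ) (hs : 0 ≤ s) (ht : 0 ≤ t)
    (hmaxs : IsMaxOn (fun x : ℝ => v x - a * x) (Set.Ici 0) s)
    (hmaxt : IsMaxOn (fun x : ℝ => v x - c * x) (Set.Ici 0) t) :
    |t - s| ≤ 2 / μ * |a - c| := by
  have h1 := quadGap ε μ hε v hv hv'' a s t hs ht hmaxs
  have h2 := quadGap ε μ hε v hv hv'' c t s ht hs hmaxt
  have hkey : μ / 2 * (t - s) ^ 2 ≤ (a - c) * (t - s) := by nlinarith
  have hkey2 : μ / 2 * |t - s| ^ 2 ≤ |a - c| * |t - s| := by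
    calc μ / 2 * |t - s| ^ 2 = μ / 2 * (t - s) ^ 2 := by rw [sq_abs]
    _ ≤ (a - c) * (t - s) := hkey
    _ ≤ |(a - c) * (t - s)| := le_abs_self _
    _ = |a - c| * |t - s| := abs_mul _ _
  rcases eq_or_lt_of_le (abs_nonneg (t - s)) with h | h
  · rw [← h]; positivity
  · rw [div_mul_eq_mul_div, le_div_iff₀ hμ]
    nlinarith [hkey2, h]

theorem stmt3
    (m N : ℕ) (hm : 0 < m) (hN : 0 < N)
    (R : Fin m → Fin N → ℝ)
    (hR01 : ∀ j i, R j i = 0 ∨ R j i = 1)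
    (hRcol : ∀ i, ∃ j, R j i = 1)
    (b : Fin m → ℝ) (hb : ∀ j, 0 < b j)
    (B σ ε : ℝ) (hB : 0 < B) (hσ : 0 < σ) (hε : 0 < ε)
    (u : Fin N → ℝ → ℝ)
    (hu_smooth : ∀ i, ContDiffOn ℝ 2 (u i) (Set.Ioi (-ε)))
    (hu0 : ∀ i, u i 0 = 0)
    (hu'pos : ∀ i, 0 < deriv (u i) 0)
    (hu'le : ∀ i, deriv (u i) 0 ≤ B)
    (hu'' : ∀ i, ∀ x : ℝ, 0 ≤ x → (N : ℝ) * σ ≤ -(deriv (deriv (u i)) x))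
    (xbar : (Fin m → ℝ) → Fin N → ℝ)
    (hxbar : ∀ lam : Fin m → ℝ, (∀ j, 0 ≤ lam j) → ∀ i : Fin N,
      0 ≤ xbar lam i ∧
      IsMaxOn (fun x : ℝ => u i x - (∑ j, lam j * R j i) * x) (Set.Ici 0) (xbar lam i) ∧
      ∀ y : ℝ, 0 ≤ y →
        IsMaxOn (fun x : ℝ => u i x - (∑ j, lam j * R j i) * x) (Set.Ici 0) y →
        y = xbar lam i)
    (q : (Fin m → ℝ) → ℝ)
    (hq : ∀ lam : Fin m → ℝ, q lam = sSup ((fun x : Fin N → ℝ =>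
      (∑ i, u i (x i)) + ∑ j, lam j * (b j - ∑ i, R j i * x i)) ''
      {x : Fin N → ℝ | ∀ i, 0 ≤ x i}))
    : ∀ lam : Fin m → ℝ, (∀ j, 0 ≤ lam j) →
      HasFDerivWithinAt q
        (∑ j, (b j - ∑ i, R j i * xbar lam i) •
          (ContinuousLinearMap.proj j : (Fin m → ℝ) →L[ℝ] ℝ))
        {ν : Fin m → ℝ | ∀ j, 0 ≤ ν j} lam := by
  intro lam hlam
  have hμ : 0 < (N : ℝ) * σ := by positivity
  -- the objective and its separable form
  set F : (Fin m → ℝ) → (Fin N → ℝ) → ℝ := fun ν x =>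
    (∑ i, u i (x i)) + ∑ j, ν j * (b j - ∑ i, R j i * x i) with hFdef
  set a : (Fin m → ℝ) → Fin N → ℝ := fun ν i => ∑ j, ν j * R j i with hadef
  have hswap : ∀ (ν : Fin m → ℝ) (x : Fin N → ℝ),
      ∑ j, ν j * ∑ i, R j i * x i = ∑ i, a ν i * x i := by
    intro ν x
    simp only [hadef, Finset.mul_sum, Finset.sum_mul]
    rw [Finset.sum_comm]
    exact Finset.sum_congr rfl fun i _ => Finset.sum_congr rfl fun j _ => by ring
  have hFexp : ∀ ν x, F ν x = (∑ i, (u i (x i) - a ν i * x i)) + ∑ j, ν j * b j := by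
    intro ν x
    simp only [hFdef, mul_sub, Finset.sum_sub_distrib, hswap]
    ring
  -- the supremum is attained at xbar
  have hGreatest : ∀ ν : Fin m → ℝ, (∀ j, 0 ≤ ν j) →
      IsGreatest ((fun x : Fin N → ℝ =>
        (∑ i, u i (x i)) + ∑ j, ν j * (b j - ∑ i, R j i * x i)) ''
        {x : Fin N → ℝ | ∀ i, 0 ≤ x i}) (F ν (xbar ν)) := by
    intro ν hν
    constructor
    · exact ⟨xbar ν, fun i => (hxbar ν hν i).1, rfl⟩
    · rintro y ⟨x, hx, rfl⟩
      show F ν x ≤ F ν (xbar ν)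
      rw [hFexp, hFexp]
      have hterm : ∀ i ∈ Finset.univ, u i (x i) - a ν i * x i ≤
          u i (xbar ν i) - a ν i * xbar ν i := fun i _ =>
        (hxbar ν hν i).2.1 (Set.mem_Ici.mpr (hx i))
      exact add_le_add (Finset.sum_le_sum hterm) le_rfl
  have qval : ∀ ν : Fin m → ℝ, (∀ j, 0 ≤ ν j) → q ν = F ν (xbar ν) := by
    intro ν hν
    rw [hq]
    exact (hGreatest ν hν).csSup_eq
  have qlower : ∀ ν : Fin m → ℝ, (∀ j, 0 ≤ ν j) → F ν (xbar lam) ≤ q ν := by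
    intro ν hν
    rw [hq]
    exact le_csSup (hGreatest ν hν).bddAbove ⟨xbar lam, fun i => (hxbar lam hlam i).1, rfl⟩
  -- difference identity
  have hdiff : ∀ (ν : Fin m → ℝ) (x : Fin N → ℝ),
      F ν x - F lam x = ∑ j, (b j - ∑ i, R j i * x i) * (ν j - lam j) := by
    intro ν x
    calc F ν x - F lam x
        = ∑ j, (ν j * (b j - ∑ i, R j i * x i) - lam j * (b j - ∑ i, R j i * x i)) := by
          simp only [hFdef]
          rw [Finset.sum_sub_distrib]
          ring
      _ = ∑ j, (b j - ∑ i, R j i * x i) * (ν j - lam j) :=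
          Finset.sum_congr rfl fun j _ => by ring
  -- Lipschitz bound on xbar
  have hRabs : ∀ j i, |R j i| ≤ 1 := by
    intro j i
    rcases hR01 j i with h | h <;> rw [h] <;> norm_num
  have hlip : ∀ ν : Fin m → ℝ, (∀ j, 0 ≤ ν j) → ∀ i,
      |xbar ν i - xbar lam i| ≤ 2 / ((N:ℝ) * σ) * ∑ j, |ν j - lam j| := by
    intro ν hν i
    have h := lipMax ε ((N:ℝ) * σ) hε hμ (u i) (hu_smooth i) (hu'' i)
      (∑ j, lam j * R j i) (∑ j, ν j * R j i) (xbar lam i) (xbar ν i)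
      (hxbar lam hlam i).1 (hxbar ν hν i).1 (hxbar lam hlam i).2.1 (hxbar ν hν i).2.1
    refine h.trans ?_
    have h2 : |∑ j, lam j * R j i - ∑ j, ν j * R j i| ≤ ∑ j, |ν j - lam j| := by
      rw [← Finset.sum_sub_distrib]
      refine (Finset.abs_sum_le_sum_abs _ _).trans (Finset.sum_le_sum fun j _ => ?_)
      have : lam j * R j i - ν j * R j i = (lam j - ν j) * R j i := by ring
      rw [this, abs_mul, abs_sub_comm]
      calc |ν j - lam j| * |R j i| ≤ |ν j - lam j| * 1 :=
            mul_le_mul_of_nonneg_left (hRabs j i) (abs_nonneg _)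
        _ = |ν j - lam j| := mul_one _
    have hpos : (0:ℝ) ≤ 2 / ((N:ℝ) * σ) := by positivity
    exact mul_le_mul_of_nonneg_left h2 hpos
  -- error bound
  have herr : ∀ ν : Fin m → ℝ, (∀ j, 0 ≤ ν j) →
      |q ν - q lam - ∑ j, (b j - ∑ i, R j i * xbar lam i) * (ν j - lam j)| ≤
        2 * N / ((N:ℝ) * σ) * (∑ j, |ν j - lam j|) ^ 2 := by
    intro ν hν
    set D := ∑ j, |ν j - lam j| with hDdef
    have hD0 : 0 ≤ D := Finset.sum_nonneg fun j _ => abs_nonneg _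
    have hlow : 0 ≤ q ν - q lam - ∑ j, (b j - ∑ i, R j i * xbar lam i) * (ν j - lam j) := by
      have h1 : F ν (xbar lam) - F lam (xbar lam) =
          ∑ j, (b j - ∑ i, R j i * xbar lam i) * (ν j - lam j) := hdiff ν (xbar lam)
      have h2 := qlower ν hν
      have h3 := qval lam hlam
      linarith
    have hup : q ν - q lam - ∑ j, (b j - ∑ i, R j i * xbar lam i) * (ν j - lam j) ≤
        2 * N / ((N:ℝ) * σ) * D ^ 2 := by
      have h1 : F ν (xbar ν) - F lam (xbar ν) =
          ∑ j, (b j - ∑ i, R j i * xbar ν i) * (ν j - lam j) := hdiff ν (xbar ν)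
      have h2 : F lam (xbar ν) ≤ q lam := by
        rw [qval lam hlam]
        exact (hGreatest lam hlam).2 ⟨xbar ν, fun i => (hxbar ν hν i).1, rfl⟩
      have h3 : q ν = F ν (xbar ν) := qval ν hν
      have h4 : ∑ j, (b j - ∑ i, R j i * xbar ν i) * (ν j - lam j) -
          ∑ j, (b j - ∑ i, R j i * xbar lam i) * (ν j - lam j) ≤
          2 * N / ((N:ℝ) * σ) * D ^ 2 := by
        rw [← Finset.sum_sub_distrib]
        have hterm : ∀ j ∈ Finset.univ,
            (b j - ∑ i, R j i * xbar ν i) * (ν j - lam j) -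
              (b j - ∑ i, R j i * xbar lam i) * (ν j - lam j) ≤
            |ν j - lam j| * ((N:ℝ) * (2 / ((N:ℝ) * σ) * D)) := by
          intro j _
          have e1 : (b j - ∑ i, R j i * xbar ν i) * (ν j - lam j) -
              (b j - ∑ i, R j i * xbar lam i) * (ν j - lam j) =
              (∑ i, R j i * (xbar lam i - xbar ν i)) * (ν j - lam j) := by
            have e0 : ∑ i, R j i * (xbar lam i - xbar ν i) =
                (∑ i, R j i * xbar lam i) - ∑ i, R j i * xbar ν i := by
              rw [← Finset.sum_sub_distrib]
              exact Finset.sum_congr rfl fun i _ => by ring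
            rw [e0]; ring
          rw [e1]
          calc (∑ i, R j i * (xbar lam i - xbar ν i)) * (ν j - lam j)
              ≤ |(∑ i, R j i * (xbar lam i - xbar ν i)) * (ν j - lam j)| := le_abs_self _
            _ = |∑ i, R j i * (xbar lam i - xbar ν i)| * |ν j - lam j| := abs_mul _ _
            _ ≤ (∑ i, |xbar ν i - xbar lam i|) * |ν j - lam j| := by
                refine mul_le_mul_of_nonneg_right ?_ (abs_nonneg _)
                refine (Finset.abs_sum_le_sum_abs _ _).trans (Finset.sum_le_sum fun i _ => ?_)
                rw [abs_mul, abs_sub_comm]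
                calc |R j i| * |xbar ν i - xbar lam i|
                    ≤ 1 * |xbar ν i - xbar lam i| :=
                      mul_le_mul_of_nonneg_right (hRabs j i) (abs_nonneg _)
                  _ = |xbar ν i - xbar lam i| := one_mul _
            _ ≤ ((N:ℝ) * (2 / ((N:ℝ) * σ) * D)) * |ν j - lam j| := by
                refine mul_le_mul_of_nonneg_right ?_ (abs_nonneg _)
                calc ∑ i, |xbar ν i - xbar lam i|
                    ≤ ∑ _i : Fin N, 2 / ((N:ℝ) * σ) * D :=
                      Finset.sum_le_sum fun i _ => hlip ν hν i
                  _ = (N:ℝ) * (2 / ((N:ℝ) * σ) * D) := by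
                      simp [Finset.sum_const, Finset.card_univ]
            _ = |ν j - lam j| * ((N:ℝ) * (2 / ((N:ℝ) * σ) * D)) := by ring
        calc ∑ j, ((b j - ∑ i, R j i * xbar ν i) * (ν j - lam j) -
              (b j - ∑ i, R j i * xbar lam i) * (ν j - lam j))
            ≤ ∑ j, |ν j - lam j| * ((N:ℝ) * (2 / ((N:ℝ) * σ) * D)) :=
              Finset.sum_le_sum hterm
          _ = D * ((N:ℝ) * (2 / ((N:ℝ) * σ) * D)) := by
              rw [← Finset.sum_mul]
          _ = 2 * N / ((N:ℝ) * σ) * D ^ 2 := by ring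
      linarith
    rw [abs_le]
    constructor
    · have : (0:ℝ) ≤ 2 * N / ((N:ℝ) * σ) * D ^ 2 := by positivity
      linarith
    · exact hup
  -- conclude via little-o
  have hL : ∀ v : Fin m → ℝ,
      (∑ j, (b j - ∑ i, R j i * xbar lam i) •
        (ContinuousLinearMap.proj j : (Fin m → ℝ) →L[ℝ] ℝ)) v =
      ∑ j, (b j - ∑ i, R j i * xbar lam i) * (v j) := by
    intro v
    simp [ContinuousLinearMap.sum_apply, ContinuousLinearMap.proj_apply]
  rw [hasFDerivWithinAt_iff_isLittleO]
  rw [Asymptotics.isLittleO_iff]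
  intro c hc
  set C : ℝ := 2 * N / ((N:ℝ) * σ) * m ^ 2 with hCdef
  have hCpos : 0 < C := by
    have : (0:ℝ) < m := by exact_mod_cast hm
    have : (0:ℝ) < N := by exact_mod_cast hN
    positivity
  have hball : Metric.ball lam (c / C) ∈ nhdsWithin lam {ν : Fin m → ℝ | ∀ j, 0 ≤ ν j} :=
    nhdsWithin_le_nhds (Metric.ball_mem_nhds _ (by positivity))
  filter_upwards [hball, self_mem_nhdsWithin] with ν hbν hνs
  have hνs' : ∀ j, 0 ≤ ν j := hνs
  have hdist : ‖ν - lam‖ < c / C := by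
    have := Metric.mem_ball.mp hbν
    rwa [dist_eq_norm] at this
  have hDnorm : ∑ j, |ν j - lam j| ≤ (m:ℝ) * ‖ν - lam‖ := by
    calc ∑ j, |ν j - lam j| ≤ ∑ _j : Fin m, ‖ν - lam‖ :=
          Finset.sum_le_sum fun j _ => by
            simpa [Pi.sub_apply, Real.norm_eq_abs] using norm_le_pi_norm (ν - lam) j
      _ = (m:ℝ) * ‖ν - lam‖ := by simp [Finset.sum_const, Finset.card_univ]
  have herr' := herr ν hνs'
  have hLv : (∑ j, (b j - ∑ i, R j i * xbar lam i) •
        (ContinuousLinearMap.proj j : (Fin m → ℝ) →L[ℝ] ℝ)) (ν - lam) =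
      ∑ j, (b j - ∑ i, R j i * xbar lam i) * (ν j - lam j) := by
    rw [hL (ν - lam)]
    exact Finset.sum_congr rfl fun j _ => by rw [Pi.sub_apply]
  rw [Real.norm_eq_abs, hLv]
  have hD0 : 0 ≤ ∑ j, |ν j - lam j| := Finset.sum_nonneg fun j _ => abs_nonneg _
  have hn0 : 0 ≤ ‖ν - lam‖ := norm_nonneg _
  have hsq : (∑ j, |ν j - lam j|) ^ 2 ≤ ((m:ℝ) * ‖ν - lam‖) ^ 2 := by
    exact pow_le_pow_left₀ hD0 hDnorm 2
  have step1 : |q ν - q lam - ∑ j, (b j - ∑ i, R j i * xbar lam i) * (ν j - lam j)| ≤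
      C * ‖ν - lam‖ ^ 2 := by
    refine herr'.trans ?_
    have h2N : (0:ℝ) ≤ 2 * N / ((N:ℝ) * σ) := by positivity
    calc 2 * N / ((N:ℝ) * σ) * (∑ j, |ν j - lam j|) ^ 2
        ≤ 2 * N / ((N:ℝ) * σ) * ((m:ℝ) * ‖ν - lam‖) ^ 2 :=
          mul_le_mul_of_nonneg_left hsq h2N
      _ = C * ‖ν - lam‖ ^ 2 := by rw [hCdef]; ring
  refine step1.trans ?_
  have : C * ‖ν - lam‖ ≤ c := by
    rcases eq_or_lt_of_le hn0 with h | h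
    · rw [← h]; simp; linarith
    · have h2 : C * ‖ν - lam‖ < C * (c / C) := mul_lt_mul_of_pos_left hdist hCpos
      have h3 : C * (c / C) = c := by field_simp
      linarith
  nlinarith
end

section
/- The gradient of the dual objective is (m/σ)-Lipschitz on ℝ^m_+: for all λ, μ ∈ ℝ^m_+, ‖q'(λ) − q'(μ)‖ ≤ (m/σ)‖λ − μ‖, where ‖·‖ is the Euclidean norm. -/
open Set

private lemma deriv_nonpos_of_max (f : ℝ → ℝ) (f' c : ℝ) (hc : 0 ≤ c)
    (hmax : IsMaxOn f (Set.Ici 0) c) (hd : HasDerivAt f f' c) : f' ≤ 0 := by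
  have h1 : (1:ℝ) ∈ posTangentConeAt (Set.Ici (0:ℝ)) c := by
    have := sub_mem_posTangentConeAt_of_segment_subset (x := c) (y := c + 1) (s := Set.Ici (0:ℝ))
      (by
        intro z hz
        rcases hz with ⟨a, b, ha, hb, hab, rfl⟩
        have : (0:ℝ) ≤ a * c + b * (c+1) := by nlinarith
        simpa [smul_eq_mul] using this)
    simpa using this
  have := hmax.localize.hasFDerivWithinAt_nonpos (hd.hasFDerivAt.hasFDerivWithinAt) h1
  simpa using this

private lemma key_one (ε K : ℝ) (hε : 0 < ε) (hK : 0 < K) (u : ℝ → ℝ)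
    (hu : ContDiffOn ℝ 2 u (Set.Ioi (-ε)))
    (hu'' : ∀ x : ℝ, 0 ≤ x → K ≤ -(deriv (deriv u) x))
    (p r a c : ℝ) (ha : 0 ≤ a) (hc : 0 ≤ c)
    (hmaxa : IsMaxOn (fun x => u x - p * x) (Set.Ici 0) a)
    (hmaxc : IsMaxOn (fun x => u x - r * x) (Set.Ici 0) c) :
    a - c ≤ |p - r| / K := by
  rcases le_or_gt a c with h | h
  · have : (0:ℝ) ≤ |p - r| / K := div_nonneg (abs_nonneg _) hK.le
    linarith
  have hmem : ∀ x : ℝ, 0 ≤ x → x ∈ Set.Ioi (-ε) := fun x hx => by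
    simp only [Set.mem_Ioi]; linarith
  have hder : ∀ x : ℝ, 0 ≤ x → HasDerivAt u (deriv u x) x := by
    intro x hx
    exact ((hu.differentiableOn (by norm_num)).differentiableAt
      ((isOpen_Ioi).mem_nhds (hmem x hx))).hasDerivAt
  have hu' : ContDiffOn ℝ 1 (deriv u) (Set.Ioi (-ε)) :=
    hu.deriv_of_isOpen isOpen_Ioi (by norm_num)
  have hder2 : ∀ x : ℝ, 0 ≤ x → HasDerivAt (deriv u) (deriv (deriv u) x) x := by
    intro x hx
    exact ((hu'.differentiableOn (by norm_num)).differentiableAt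
      ((isOpen_Ioi).mem_nhds (hmem x hx))).hasDerivAt
  have hfa : HasDerivAt (fun x => u x - p * x) (deriv u a - p) a := by
    exact ((hder a ha).sub ((hasDerivAt_id a).const_mul p)).congr_deriv (by ring)
  have hfc : HasDerivAt (fun x => u x - r * x) (deriv u c - r) c := by
    exact ((hder c hc).sub ((hasDerivAt_id c).const_mul r)).congr_deriv (by ring)
  have ha0 : 0 < a := lt_of_le_of_lt hc h
  have heqa : deriv u a - p = 0 := by
    have hloc : IsLocalMax (fun x => u x - p * x) a :=
      hmaxa.localize.isLocalMax (Ici_mem_nhds ha0)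
    exact hloc.hasDerivAt_eq_zero hfa
  have hlec : deriv u c - r ≤ 0 := deriv_nonpos_of_max _ _ c hc hmaxc hfc
  obtain ⟨ξ, hξ, hξeq⟩ := exists_hasDerivAt_eq_slope (deriv u) (deriv (deriv u)) h
    (ContinuousOn.mono (hu'.continuousOn) (by
      intro x hx
      exact hmem x (le_trans hc hx.1)))
    (fun x hx => hder2 x (le_trans hc hx.1.le))
  have hξ0 : 0 ≤ ξ := le_trans hc hξ.1.le
  have hKξ : K ≤ -(deriv (deriv u) ξ) := hu'' ξ hξ0
  have hslope : deriv u a - deriv u c = deriv (deriv u) ξ * (a - c) := by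
    rw [eq_div_iff (by linarith : a - c ≠ 0)] at hξeq
    linarith [hξeq]
  have hmain : K * (a - c) ≤ r - p := by nlinarith
  have habs : r - p ≤ |p - r| := by
    rw [abs_sub_comm]; exact le_abs_self _
  rw [le_div_iff₀ hK]
  nlinarith

open Finset MeasureTheory ProbabilityTheory Real

theorem stmt4
    (m N : ℕ) (hm : 0 < m) (hN : 0 < N)
    (R : Fin m → Fin N → ℝ)
    (hR01 : ∀ j i, R j i = 0 ∨ R j i = 1)
    (hRcol : ∀ i, ∃ j, R j i = 1)
    (b : Fin m → ℝ) (hb : ∀ j, 0 < b j)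
    (B σ ε : ℝ) (hB : 0 < B) (hσ : 0 < σ) (hε : 0 < ε)
    (u : Fin N → ℝ → ℝ)
    (hu_smooth : ∀ i, ContDiffOn ℝ 2 (u i) (Set.Ioi (-ε)))
    (hu0 : ∀ i, u i 0 = 0)
    (hu'pos : ∀ i, 0 < deriv (u i) 0)
    (hu'le : ∀ i, deriv (u i) 0 ≤ B)
    (hu'' : ∀ i, ∀ x : ℝ, 0 ≤ x → (N : ℝ) * σ ≤ -(deriv (deriv (u i)) x))
    (xbar : (Fin m → ℝ) → Fin N → ℝ)
    (hxbar : ∀ lam : Fin m → ℝ, (∀ j, 0 ≤ lam j) → ∀ i : Fin N,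
      0 ≤ xbar lam i ∧
      IsMaxOn (fun x : ℝ => u i x - (∑ j, lam j * R j i) * x) (Set.Ici 0) (xbar lam i) ∧
      ∀ y : ℝ, 0 ≤ y →
        IsMaxOn (fun x : ℝ => u i x - (∑ j, lam j * R j i) * x) (Set.Ici 0) y →
        y = xbar lam i)
    (q : (Fin m → ℝ) → ℝ)
    (hq : ∀ lam : Fin m → ℝ, q lam = sSup ((fun x : Fin N → ℝ =>
      (∑ i, u i (x i)) + ∑ j, lam j * (b j - ∑ i, R j i * x i)) ''
      {x : Fin N → ℝ | ∀ i, 0 ≤ x i}))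
    (hq' : ∀ lam : Fin m → ℝ, (∀ j, 0 ≤ lam j) →
      HasFDerivWithinAt q
        (∑ j, (b j - ∑ i, R j i * xbar lam i) •
          (ContinuousLinearMap.proj j : (Fin m → ℝ) →L[ℝ] ℝ))
        {ν : Fin m → ℝ | ∀ j, 0 ≤ ν j} lam)
    : ∀ lam mu : Fin m → ℝ, (∀ j, 0 ≤ lam j) → (∀ j, 0 ≤ mu j) →
      Real.sqrt (∑ j, ((b j - ∑ i, R j i * xbar lam i)
        - (b j - ∑ i, R j i * xbar mu i)) ^ 2) ≤
      ((m : ℝ) / σ) * Real.sqrt (∑ j, (lam j - mu j) ^ 2) := by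
  intro lam mu hlam hmu
  set K : ℝ := (N : ℝ) * σ with hKdef
  have hK : 0 < K := mul_pos (by exact_mod_cast hN) hσ
  set S : ℝ := ∑ j, |lam j - mu j| with hSdef
  have hS : 0 ≤ S := Finset.sum_nonneg fun j _ => abs_nonneg _
  set T : ℝ := ∑ j, (lam j - mu j) ^ 2 with hTdef
  have hT : 0 ≤ T := Finset.sum_nonneg fun j _ => sq_nonneg _
  -- Step 1: each coordinate of xbar is (1/K)-Lipschitz in the price
  have hstep1 : ∀ i : Fin N, |xbar lam i - xbar mu i| ≤ S / K := by
    intro i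
    set p : ℝ := ∑ j, lam j * R j i with hpdef
    set r : ℝ := ∑ j, mu j * R j i with hrdef
    obtain ⟨hal, hml, -⟩ := hxbar lam hlam i
    obtain ⟨ham, hmm', -⟩ := hxbar mu hmu i
    have h1 := key_one ε K hε hK (u i) (hu_smooth i) (hu'' i) p r _ _ hal ham hml hmm'
    have h2 := key_one ε K hε hK (u i) (hu_smooth i) (hu'' i) r p _ _ ham hal hmm' hml
    rw [abs_sub_comm] at h2
    have habs : |xbar lam i - xbar mu i| ≤ |p - r| / K := abs_sub_le_iff.mpr ⟨h1, h2⟩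
    have hpr : |p - r| ≤ S := by
      have heq : p - r = ∑ j, (lam j - mu j) * R j i := by
        rw [hpdef, hrdef, ← Finset.sum_sub_distrib]
        exact Finset.sum_congr rfl fun j _ => by ring
      rw [heq]
      calc |∑ j, (lam j - mu j) * R j i| ≤ ∑ j, |(lam j - mu j) * R j i| :=
            Finset.abs_sum_le_sum_abs _ _
        _ ≤ ∑ j, |lam j - mu j| := by
            refine Finset.sum_le_sum fun j _ => ?_
            rw [abs_mul]
            rcases hR01 j i with h | h <;> simp [h]
    calc |xbar lam i - xbar mu i| ≤ |p - r| / K := habs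
      _ ≤ S / K := by gcongr
  -- Step 2: each coordinate of the gradient difference is bounded by S/σ
  have hstep2 : ∀ j : Fin m,
      |(b j - ∑ i, R j i * xbar lam i) - (b j - ∑ i, R j i * xbar mu i)| ≤ S / σ := by
    intro j
    have heq : (b j - ∑ i, R j i * xbar lam i) - (b j - ∑ i, R j i * xbar mu i)
        = ∑ i, R j i * (xbar mu i - xbar lam i) := by
      simp only [mul_sub, Finset.sum_sub_distrib]
      ring
    rw [heq]
    have hterm : ∀ i : Fin N, |R j i * (xbar mu i - xbar lam i)| ≤ S / K := by
      intro i
      rw [abs_mul]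
      have := hstep1 i
      rw [abs_sub_comm] at this
      rcases hR01 j i with h | h <;> simp [h]
      · exact div_nonneg hS hK.le
      · exact this
    calc |∑ i, R j i * (xbar mu i - xbar lam i)|
        ≤ ∑ i : Fin N, |R j i * (xbar mu i - xbar lam i)| := Finset.abs_sum_le_sum_abs _ _
      _ ≤ ∑ _i : Fin N, S / K := Finset.sum_le_sum fun i _ => hterm i
      _ = (N : ℝ) * (S / K) := by rw [Finset.sum_const]; simp [mul_comm]
      _ = S / σ := by
          rw [hKdef]
          field_simp
    
  -- Step 3: sum of squares bound
  have hstep3 : (∑ j, ((b j - ∑ i, R j i * xbar lam i)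
      - (b j - ∑ i, R j i * xbar mu i)) ^ 2) ≤ (m : ℝ) * (S / σ) ^ 2 := by
    calc (∑ j, ((b j - ∑ i, R j i * xbar lam i) - (b j - ∑ i, R j i * xbar mu i)) ^ 2)
        ≤ ∑ _j : Fin m, (S / σ) ^ 2 := by
          refine Finset.sum_le_sum fun j _ => ?_
          have h := hstep2 j
          calc ((b j - ∑ i, R j i * xbar lam i) - (b j - ∑ i, R j i * xbar mu i)) ^ 2
              = |(b j - ∑ i, R j i * xbar lam i) - (b j - ∑ i, R j i * xbar mu i)| ^ 2 := by
                rw [sq_abs]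
            _ ≤ (S / σ) ^ 2 := by
                apply pow_le_pow_left₀ (abs_nonneg _) h
      _ = (m : ℝ) * (S / σ) ^ 2 := by rw [Finset.sum_const]; simp [mul_comm]
  -- Step 4: Cauchy-Schwarz: S ≤ √m √T
  have hstep4 : S ≤ Real.sqrt m * Real.sqrt T := by
    have hcs : S ^ 2 ≤ (m : ℝ) * T := by
      have := sq_sum_le_card_mul_sum_sq (s := Finset.univ)
        (f := fun j : Fin m => |lam j - mu j|)
      simpa [sq_abs, hSdef, hTdef] using this
    calc S = Real.sqrt (S ^ 2) := (Real.sqrt_sq hS).symm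
      _ ≤ Real.sqrt ((m : ℝ) * T) := Real.sqrt_le_sqrt hcs
      _ = Real.sqrt m * Real.sqrt T := Real.sqrt_mul (Nat.cast_nonneg m) T
  -- Conclusion
  have hmm2 : Real.sqrt m * Real.sqrt m = (m : ℝ) := Real.mul_self_sqrt (Nat.cast_nonneg m)
  calc Real.sqrt (∑ j, ((b j - ∑ i, R j i * xbar lam i)
        - (b j - ∑ i, R j i * xbar mu i)) ^ 2)
      ≤ Real.sqrt ((m : ℝ) * (S / σ) ^ 2) := Real.sqrt_le_sqrt hstep3
    _ = Real.sqrt m * (S / σ) := by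
        rw [Real.sqrt_mul (Nat.cast_nonneg m), Real.sqrt_sq (div_nonneg hS hσ.le)]
    _ ≤ Real.sqrt m * ((Real.sqrt m * Real.sqrt T) / σ) := by gcongr
    _ = ((m : ℝ) / σ) * Real.sqrt T := by
        rw [show Real.sqrt m * ((Real.sqrt m * Real.sqrt T) / σ)
          = (Real.sqrt m * Real.sqrt m) * Real.sqrt T / σ by ring, hmm2]
        ring
end

section
/- For every λ ∈ ℝ^m_+ and every x ∈ ℝ^N_+, (Nσ/2) Σ_{i=1}^N (x^i − x̄^i(λ))² ≤ q(λ) − Σ_{i=1}^N u_i(x^i) − ⟨λ, b − Rx⟩. In particular, for the optimal solution x* of the primal problem and any dual-optimal λ*, (Nσ/2) Σ_{i=1}^N (x*^i − x̄^i(λ))² ≤ q(λ) − q(λ*). -/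
open Finset MeasureTheory ProbabilityTheory Real

lemma strong_key {ε K : ℝ} (hε : 0 < ε) (hK : 0 < K) (f : ℝ → ℝ)
    (hf : ContDiffOn ℝ 2 f (Set.Ioi (-ε)))
    (hf'' : ∀ x : ℝ, 0 ≤ x → K ≤ -(deriv (deriv f) x))
    (c z : ℝ) (hz : 0 ≤ z)
    (hmax : IsMaxOn (fun x => f x - c * x) (Set.Ici 0) z) :
    ∀ x : ℝ, 0 ≤ x → f x - c * x + K / 2 * (x - z) ^ 2 ≤ f z - c * z := by
  have hsub : Set.Ici (0:ℝ) ⊆ Set.Ioi (-ε) := fun y hy => lt_of_lt_of_le (by linarith : -ε < 0) hy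
  have hmem : ∀ y : ℝ, 0 ≤ y → y ∈ Set.Ioi (-ε) := fun y hy => hsub hy
  -- differentiability facts
  have hfd : ∀ y ∈ Set.Ioi (-ε), DifferentiableAt ℝ f y := fun y hy =>
    ((hf.contDiffAt (isOpen_Ioi.mem_nhds hy)).differentiableAt (by norm_num))
  have hfd' : ∀ y ∈ Set.Ioi (-ε), DifferentiableAt ℝ (deriv f) y := by
    intro y hy
    have h2 : ContDiffAt ℝ 1 (fderiv ℝ f) y :=
      (hf.contDiffAt (isOpen_Ioi.mem_nhds hy)).fderiv_right (by norm_num)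
    have h3 : DifferentiableAt ℝ (fun w => (fderiv ℝ f w : ℝ → ℝ) 1) y :=
      (h2.differentiableAt (by norm_num)).clm_apply (differentiableAt_const _)
    have : (fun w => (fderiv ℝ f w : ℝ → ℝ) 1) = deriv f := by
      funext w; exact fderiv_apply_one_eq_deriv
    rwa [this] at h3
  set φ : ℝ → ℝ := fun x => f x - c * x + K / 2 * x ^ 2 with hφ
  have hpoly : ∀ y : ℝ, HasDerivAt (fun w : ℝ => K / 2 * w ^ 2 - c * w) (K * y - c) y := by
    intro y
    have hp : HasDerivAt (fun w : ℝ => w ^ 2) (2 * y) y := by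
      simpa using hasDerivAt_pow 2 y
    have h1 : HasDerivAt (fun w : ℝ => K / 2 * w ^ 2) (K / 2 * (2 * y)) y :=
      hp.const_mul (K / 2)
    have h2 : HasDerivAt (fun w : ℝ => c * w) c y := by
      simpa using (hasDerivAt_id y).const_mul c
    have := h1.sub h2
    exact this.congr_deriv (by ring)
  have hderivφ : ∀ y ∈ Set.Ioi (-ε), deriv φ y = deriv f y + (K * y - c) := by
    intro y hy
    have : φ = fun w => f w + (K / 2 * w ^ 2 - c * w) := by funext w; simp [hφ]; ring
    rw [this, deriv_fun_add (hfd y hy) (hpoly y).differentiableAt, (hpoly y).deriv]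
  have hderivφ_ev : ∀ y ∈ Set.Ioi (-ε),
      deriv φ =ᶠ[nhds y] fun w => deriv f w + (K * w - c) := by
    intro y hy
    filter_upwards [isOpen_Ioi.mem_nhds hy] with w hw using hderivφ w hw
  -- concavity of φ on [0, ∞)
  have hconc : ConcaveOn ℝ (Set.Ici 0) φ := by
    apply concaveOn_of_deriv2_nonpos (convex_Ici 0)
    · apply ContinuousOn.add
      · exact (hf.continuousOn.mono hsub).sub (continuous_const.mul continuous_id).continuousOn
      · exact (continuous_const.mul (continuous_pow 2)).continuousOn
    · rw [interior_Ici]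
      intro y hy
      have hy' : y ∈ Set.Ioi (-ε) := hmem y (le_of_lt hy)
      exact (((hfd y hy').sub ((differentiableAt_id.const_mul c))).add
        (((differentiableAt_pow 2).const_mul (K/2)))).differentiableWithinAt
    · rw [interior_Ici]
      intro y hy
      have hy' : y ∈ Set.Ioi (-ε) := hmem y (le_of_lt hy)
      have : DifferentiableAt ℝ (fun w => deriv f w + (K * w - c)) y :=
        (hfd' y hy').add ((differentiableAt_id.const_mul K).sub (differentiableAt_const c))
      exact (((hderivφ_ev y hy').differentiableAt_iff).mpr this).differentiableWithinAt
    · rw [interior_Ici]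
      intro y hy
      have hy' : y ∈ Set.Ioi (-ε) := hmem y (le_of_lt hy)
      have h1 : deriv (deriv φ) y = deriv (fun w => deriv f w + (K * w - c)) y :=
        (hderivφ_ev y hy').deriv_eq
      have h2 : deriv (fun w => deriv f w + (K * w - c)) y = deriv (deriv f) y + K := by
        rw [deriv_fun_add (g := fun w => K * w - c) (hfd' y hy')
          ((differentiableAt_id.const_mul K).sub (differentiableAt_const c))]
        have : HasDerivAt (fun w : ℝ => K * w - c) K y := by
          simpa using ((hasDerivAt_id y).const_mul K).sub_const c
        rw [this.deriv]
      have h3 := hf'' y (le_of_lt hy)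
      simp only [Function.iterate_succ, Function.iterate_zero, Function.comp_apply, id_eq]
      rw [h1, h2]; linarith
  -- the key pointwise inequality
  intro x hx
  set g : ℝ → ℝ := fun w => f w - c * w with hg
  have key : ∀ t : ℝ, t ∈ Set.Ioc (0:ℝ) 1 → K / 2 * (1 - t) * (x - z) ^ 2 ≤ g z - g x := by
    intro t ht
    obtain ⟨ht0, ht1⟩ := ht
    have hpt : (1 - t) * z + t * x ∈ Set.Ici (0:ℝ) := by
      have : 0 ≤ (1 - t) * z := mul_nonneg (by linarith) hz
      have : 0 ≤ t * x := mul_nonneg (le_of_lt ht0) hx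
      simp only [Set.mem_Ici]; linarith
    have hcc := hconc.2 (Set.mem_Ici.mpr hz) (Set.mem_Ici.mpr hx)
      (by linarith : (0:ℝ) ≤ 1 - t) (le_of_lt ht0) (by ring)
    have hmx := hmax hpt
    simp only [smul_eq_mul, Set.mem_setOf_eq] at hcc hmx
    simp only [hφ, hg] at hcc hmx ⊢
    nlinarith [sq_nonneg (x - z), mul_pos ht0 ht0]
  have htend : Filter.Tendsto (fun t : ℝ => K / 2 * (1 - t) * (x - z) ^ 2) (nhdsWithin 0 (Set.Ioi 0))
      (nhds (K / 2 * (x - z) ^ 2)) := by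
    have hc : Continuous (fun t : ℝ => K / 2 * (1 - t) * (x - z) ^ 2) := by continuity
    have := (hc.tendsto 0).mono_left (nhdsWithin_le_nhds (s := Set.Ioi (0:ℝ)))
    simpa using this
  have hfin : K / 2 * (x - z) ^ 2 ≤ g z - g x := by
    apply le_of_tendsto htend
    filter_upwards [Ioc_mem_nhdsGT (zero_lt_one)] with t ht using key t ht
  simp only [hg] at hfin
  linarith

theorem stmt6
    (m N : ℕ) (hm : 0 < m) (hN : 0 < N)
    (R : Fin m → Fin N → ℝ)
    (hR01 : ∀ j i, R j i = 0 ∨ R j i = 1)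
    (hRcol : ∀ i, ∃ j, R j i = 1)
    (b : Fin m → ℝ) (hb : ∀ j, 0 < b j)
    (B σ ε : ℝ) (hB : 0 < B) (hσ : 0 < σ) (hε : 0 < ε)
    (u : Fin N → ℝ → ℝ)
    (hu_smooth : ∀ i, ContDiffOn ℝ 2 (u i) (Set.Ioi (-ε)))
    (hu0 : ∀ i, u i 0 = 0)
    (hu'pos : ∀ i, 0 < deriv (u i) 0)
    (hu'le : ∀ i, deriv (u i) 0 ≤ B)
    (hu'' : ∀ i, ∀ x : ℝ, 0 ≤ x → (N : ℝ) * σ ≤ -(deriv (deriv (u i)) x))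
    (xbar : (Fin m → ℝ) → Fin N → ℝ)
    (hxbar : ∀ lam : Fin m → ℝ, (∀ j, 0 ≤ lam j) → ∀ i : Fin N,
      0 ≤ xbar lam i ∧
      IsMaxOn (fun x : ℝ => u i x - (∑ j, lam j * R j i) * x) (Set.Ici 0) (xbar lam i) ∧
      ∀ y : ℝ, 0 ≤ y →
        IsMaxOn (fun x : ℝ => u i x - (∑ j, lam j * R j i) * x) (Set.Ici 0) y →
        y = xbar lam i)
    (q : (Fin m → ℝ) → ℝ)
    (hq : ∀ lam : Fin m → ℝ, q lam = sSup ((fun x : Fin N → ℝ =>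
      (∑ i, u i (x i)) + ∑ j, lam j * (b j - ∑ i, R j i * x i)) ''
      {x : Fin N → ℝ | ∀ i, 0 ≤ x i}))
    (lamStar : Fin m → ℝ) (hlamStar0 : ∀ j, 0 ≤ lamStar j)
    (hlamStarOpt : ∀ lam : Fin m → ℝ, (∀ j, 0 ≤ lam j) → q lamStar ≤ q lam)
    (xstar : Fin N → ℝ) (hxstar0 : ∀ i, 0 ≤ xstar i)
    (hxstarFeas : ∀ j, ∑ i, R j i * xstar i ≤ b j)
    (hxstarOpt : ∀ x : Fin N → ℝ, (∀ i, 0 ≤ x i) → (∀ j, ∑ i, R j i * x i ≤ b j) →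
      ∑ i, u i (x i) ≤ ∑ i, u i (xstar i))
    (hduality : (∑ i, u i (xstar i)) = q lamStar)
    : (∀ lam : Fin m → ℝ, (∀ j, 0 ≤ lam j) → ∀ x : Fin N → ℝ, (∀ i, 0 ≤ x i) →
        ((N : ℝ) * σ / 2) * ∑ i, (x i - xbar lam i) ^ 2 ≤
          q lam - (∑ i, u i (x i)) - ∑ j, lam j * (b j - ∑ i, R j i * x i)) ∧
      (∀ lam : Fin m → ℝ, (∀ j, 0 ≤ lam j) →
        ((N : ℝ) * σ / 2) * ∑ i, (xstar i - xbar lam i) ^ 2 ≤ q lam - q lamStar) := by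
  
  classical
  have hKpos : (0:ℝ) < (N:ℝ) * σ := mul_pos (by exact_mod_cast hN) hσ
  have rearr : ∀ (lam : Fin m → ℝ) (x : Fin N → ℝ),
      ∑ j, lam j * (b j - ∑ i, R j i * x i)
        = ∑ j, lam j * b j - ∑ i, (∑ j, lam j * R j i) * x i := by
    intro lam x
    simp only [mul_sub, Finset.sum_sub_distrib, Finset.mul_sum, Finset.sum_mul, mul_assoc]
    rw [Finset.sum_comm]
  have hqval : ∀ lam : Fin m → ℝ, (∀ j, 0 ≤ lam j) →
      q lam = ∑ i, (u i (xbar lam i) - (∑ j, lam j * R j i) * xbar lam i)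
              + ∑ j, lam j * b j := by
    intro lam hlam
    rw [hq lam]
    apply IsGreatest.csSup_eq
    constructor
    · refine ⟨xbar lam, fun i => (hxbar lam hlam i).1, ?_⟩
      dsimp only
      rw [rearr lam (xbar lam), Finset.sum_sub_distrib]
      ring
    · rintro v ⟨x, hx, rfl⟩
      simp only [Set.mem_setOf_eq] at hx
      have h1 : ∑ i, u i (x i) - ∑ i, (∑ j, lam j * R j i) * x i
          ≤ ∑ i, (u i (xbar lam i) - (∑ j, lam j * R j i) * xbar lam i) := by
        rw [← Finset.sum_sub_distrib]
        exact Finset.sum_le_sum fun i _ =>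
          (hxbar lam hlam i).2.1 (Set.mem_Ici.mpr (hx i))
      dsimp only
      rw [rearr lam x]
      linarith
  have part1 : ∀ lam : Fin m → ℝ, (∀ j, 0 ≤ lam j) → ∀ x : Fin N → ℝ, (∀ i, 0 ≤ x i) →
      ((N : ℝ) * σ / 2) * ∑ i, (x i - xbar lam i) ^ 2 ≤
        q lam - (∑ i, u i (x i)) - ∑ j, lam j * (b j - ∑ i, R j i * x i) := by
    intro lam hlam x hx
    have hkey : ∀ i : Fin N,
        u i (x i) - (∑ j, lam j * R j i) * x i
            + (N : ℝ) * σ / 2 * (x i - xbar lam i) ^ 2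
          ≤ u i (xbar lam i) - (∑ j, lam j * R j i) * xbar lam i := fun i =>
      strong_key hε hKpos (u i) (hu_smooth i) (hu'' i) _ _
        (hxbar lam hlam i).1 (hxbar lam hlam i).2.1 (x i) (hx i)
    have hsum : ∑ i, (u i (x i) - (∑ j, lam j * R j i) * x i)
        + (N : ℝ) * σ / 2 * ∑ i, (x i - xbar lam i) ^ 2
        ≤ ∑ i, (u i (xbar lam i) - (∑ j, lam j * R j i) * xbar lam i) := by
      rw [Finset.mul_sum, ← Finset.sum_add_distrib]
      exact Finset.sum_le_sum fun i _ => hkey i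
    rw [hqval lam hlam, rearr lam x]
    rw [Finset.sum_sub_distrib] at hsum
    linarith
  refine ⟨part1, fun lam hlam => ?_⟩
  have h1 := part1 lam hlam xstar hxstar0
  have h2 : 0 ≤ ∑ j, lam j * (b j - ∑ i, R j i * xstar i) :=
    Finset.sum_nonneg fun j _ => mul_nonneg (hlam j) (by linarith [hxstarFeas j])
  linarith
end

section
/- If ξ is a random variable uniformly distributed on {1,…,N}, then for every λ ∈ ℝ^m_+ the second moment of the stochastic gradient is bounded by L²: E[ Σ_{j=1}^m ( b^j − N R_ξ^j x̄^ξ(λ) )² ] ≤ L², where L = ( Σ_{j=1}^m max{ b^j, B/σ − b^j }² )^{1/2}. -/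
open Finset MeasureTheory ProbabilityTheory Real

theorem stmt8
    (m N : ℕ) (hm : 0 < m) (hN : 0 < N)
    (R : Fin m → Fin N → ℝ)
    (hR01 : ∀ j i, R j i = 0 ∨ R j i = 1)
    (hRcol : ∀ i, ∃ j, R j i = 1)
    (b : Fin m → ℝ) (hb : ∀ j, 0 < b j)
    (B σ ε : ℝ) (hB : 0 < B) (hσ : 0 < σ) (hε : 0 < ε)
    (u : Fin N → ℝ → ℝ)
    (hu_smooth : ∀ i, ContDiffOn ℝ 2 (u i) (Set.Ioi (-ε)))
    (hu0 : ∀ i, u i 0 = 0)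
    (hu'pos : ∀ i, 0 < deriv (u i) 0)
    (hu'le : ∀ i, deriv (u i) 0 ≤ B)
    (hu'' : ∀ i, ∀ x : ℝ, 0 ≤ x → (N : ℝ) * σ ≤ -(deriv (deriv (u i)) x))
    (xbar : (Fin m → ℝ) → Fin N → ℝ)
    (hxbar : ∀ lam : Fin m → ℝ, (∀ j, 0 ≤ lam j) → ∀ i : Fin N,
      0 ≤ xbar lam i ∧
      IsMaxOn (fun x : ℝ => u i x - (∑ j, lam j * R j i) * x) (Set.Ici 0) (xbar lam i) ∧
      ∀ y : ℝ, 0 ≤ y →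
        IsMaxOn (fun x : ℝ => u i x - (∑ j, lam j * R j i) * x) (Set.Ici 0) y →
        y = xbar lam i)
    {Ω : Type} [MeasurableSpace Ω] (μ : Measure Ω) [IsProbabilityMeasure μ]
    (ξ : Ω → Fin N) (hξmeas : Measurable ξ)
    (hξunif : ∀ i : Fin N, μ (ξ ⁻¹' {i}) = (N : ENNReal)⁻¹)
    (L : ℝ) (hL : L = Real.sqrt (∑ j, (max (b j) (B / σ - b j)) ^ 2))
    : ∀ lam : Fin m → ℝ, (∀ j, 0 ≤ lam j) →
      ∫ ω, (∑ j, (b j - (N : ℝ) * R j (ξ ω) * xbar lam (ξ ω)) ^ 2) ∂μ ≤ L ^ 2 := by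
  intro lam hlam
  have hNpos : (0:ℝ) < N := by exact_mod_cast hN
  have hopen : IsOpen (Set.Ioi (-ε)) := isOpen_Ioi
  have hsub : Set.Ici (0:ℝ) ⊆ Set.Ioi (-ε) := fun x hx => lt_of_lt_of_le (by linarith : -ε < 0) hx
  -- differentiability facts
  have hudiff : ∀ i, ∀ x ∈ Set.Ioi (-ε), DifferentiableAt ℝ (u i) x := by
    intro i x hx
    exact ((hu_smooth i).differentiableOn (by norm_num)).differentiableAt
      (hopen.mem_nhds hx)
  have hdu : ∀ i, ContDiffOn ℝ 1 (deriv (u i)) (Set.Ioi (-ε)) := by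
    intro i
    exact (hu_smooth i).deriv_of_isOpen hopen (by norm_num : (1:WithTop ℕ∞) + 1 ≤ 2)
  have hdudiff : ∀ i, ∀ x ∈ Set.Ioi (-ε), DifferentiableAt ℝ (deriv (u i)) x := by
    intro i x hx
    exact ((hdu i).differentiableOn (by norm_num)).differentiableAt (hopen.mem_nhds hx)
  -- Step 1: deriv u i x ≤ B - Nσ x for x ≥ 0
  have key1 : ∀ i, ∀ x : ℝ, 0 ≤ x → deriv (u i) x ≤ B - (N : ℝ) * σ * x := by
    intro i x hx
    set g : ℝ → ℝ := fun y => deriv (u i) y + (N : ℝ) * σ * y with hg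
    have hanti : AntitoneOn g (Set.Ici 0) := by
      apply antitoneOn_of_deriv_nonpos (convex_Ici 0)
      · exact (((hdu i).continuousOn.mono hsub).add
          (continuous_const.mul continuous_id).continuousOn)
      · intro y hy
        rw [interior_Ici] at hy
        exact ((hdudiff i y (hsub (Set.Ioi_subset_Ici_self hy))).add
          ((differentiableAt_const _).mul differentiableAt_fun_id)).differentiableWithinAt
      · intro y hy
        rw [interior_Ici] at hy
        have hdg : deriv g y = deriv (deriv (u i)) y + (N : ℝ) * σ := by
          rw [hg]
          rw [deriv_fun_add (hdudiff i y (hsub (Set.Ioi_subset_Ici_self hy)))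
            (((differentiableAt_const _).fun_mul differentiableAt_fun_id))]
          have : deriv (fun y : ℝ => (N:ℝ) * σ * y) y = (N:ℝ) * σ := by
            simpa using ((hasDerivAt_id y).const_mul ((N:ℝ) * σ)).deriv
          rw [this]
        rw [hdg]
        have := hu'' i y (le_of_lt hy)
        linarith
    have := hanti (Set.self_mem_Ici) hx hx
    have hB0 := hu'le i
    simp only [hg] at this
    linarith
  -- Step 2: xbar lam i ≤ B / (N σ)
  set c : ℝ := B / ((N : ℝ) * σ) with hc
  have hcpos : 0 < c := div_pos hB (by positivity)
  have key2 : ∀ i, xbar lam i ≤ c := by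
    intro i
    by_contra hgt
    push_neg at hgt
    obtain ⟨hx0, hmax, huniq⟩ := hxbar lam hlam i
    set s : ℝ := ∑ j, lam j * R j i with hs
    have hs0 : 0 ≤ s := Finset.sum_nonneg fun j _ => by
      rcases hR01 j i with h | h <;> rw [h] <;> [simp; simpa using hlam j]
    set f : ℝ → ℝ := fun x => u i x - s * x with hf
    have hIcisub : Set.Ici c ⊆ Set.Ioi (-ε) := fun x hx =>
      lt_of_lt_of_le (by linarith [hcpos] : -ε < c) hx
    have hanti : AntitoneOn f (Set.Ici c) := by
      apply antitoneOn_of_deriv_nonpos (convex_Ici c)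
      · apply ContinuousOn.sub
        · exact ((hu_smooth i).continuousOn.mono hIcisub)
        · exact (continuous_const.mul continuous_id).continuousOn
      · intro y hy
        rw [interior_Ici] at hy
        exact ((hudiff i y (hIcisub (Set.Ioi_subset_Ici_self hy))).sub
          ((differentiableAt_const _).mul differentiableAt_fun_id)).differentiableWithinAt
      · intro y hy
        rw [interior_Ici] at hy
        have hdf : deriv f y = deriv (u i) y - s := by
          rw [hf, deriv_fun_sub (hudiff i y (hIcisub (Set.Ioi_subset_Ici_self hy)))
            ((differentiableAt_const _).fun_mul differentiableAt_fun_id)]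
          have : deriv (fun y : ℝ => s * y) y = s := by
            simpa using ((hasDerivAt_id y).const_mul s).deriv
          rw [this]
        rw [hdf]
        have hyc : c < y := hy
        have h1 := key1 i y (le_of_lt (lt_trans hcpos hyc))
        have h2 : (N:ℝ) * σ * c = B := by
          rw [hc]; field_simp
        nlinarith [mul_le_mul_of_nonneg_left (le_of_lt hyc) (le_of_lt (mul_pos hNpos hσ))]
    have hfc : f (xbar lam i) ≤ f c := hanti Set.self_mem_Ici (le_of_lt hgt) (le_of_lt hgt)
    have hcmax : IsMaxOn f (Set.Ici 0) c := by
      intro y hy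
      exact le_trans (hmax hy) hfc
    have := huniq c (le_of_lt hcpos) hcmax
    linarith
  -- pointwise bound
  have hbound : ∀ i : Fin N, (∑ j, (b j - (N : ℝ) * R j i * xbar lam i) ^ 2)
      ≤ ∑ j, (max (b j) (B / σ - b j)) ^ 2 := by
    intro i
    apply Finset.sum_le_sum
    intro j _
    have hx0 := (hxbar lam hlam i).1
    set t : ℝ := (N : ℝ) * R j i * xbar lam i with ht
    have ht0 : 0 ≤ t := by
      rcases hR01 j i with h | h <;> rw [ht, h]
      · simp
      · simpa using mul_nonneg (le_of_lt hNpos) hx0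
    have htle : t ≤ B / σ := by
      rcases hR01 j i with h | h <;> rw [ht, h]
      · simp; positivity
      · have := key2 i
        have : (N:ℝ) * xbar lam i ≤ (N:ℝ) * c := by
          exact mul_le_mul_of_nonneg_left this (le_of_lt hNpos)
        have hNc : (N:ℝ) * c = B / σ := by
          rw [hc]; field_simp
        rw [mul_one]
        linarith
    set M : ℝ := max (b j) (B / σ - b j) with hM
    have hM1 : b j ≤ M := le_max_left _ _
    have hM2 : B / σ - b j ≤ M := le_max_right _ _
    apply sq_le_sq'
    · linarith
    · linarith
  -- integral bound
  have hmeasint : Measurable fun ω => (∑ j, (b j - (N : ℝ) * R j (ξ ω) * xbar lam (ξ ω)) ^ 2) := by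
    exact (Measurable.of_discrete (f := fun i : Fin N => ∑ j, (b j - (N : ℝ) * R j i * xbar lam i) ^ 2)).comp hξmeas
  have hLsq : L ^ 2 = ∑ j, (max (b j) (B / σ - b j)) ^ 2 := by
    rw [hL, sq_sqrt]
    exact Finset.sum_nonneg fun j _ => sq_nonneg _
  calc ∫ ω, (∑ j, (b j - (N : ℝ) * R j (ξ ω) * xbar lam (ξ ω)) ^ 2) ∂μ
      ≤ ∫ _ω, L ^ 2 ∂μ := by
        apply integral_mono_of_nonneg
        · exact Filter.Eventually.of_forall fun ω => Finset.sum_nonneg fun j _ => sq_nonneg _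
        · exact integrable_const _
        · exact Filter.Eventually.of_forall fun ω => by
            rw [hLsq]; exact hbound (ξ ω)
    _ = L ^ 2 := by simp
end

section
/- Let (λ_t)_{t≥1} be generated by the projected stochastic gradient descent recursion with steps η_t = K/√t, K > 0. Then for every T ≥ 1, E q(λ̄_T) ≤ q(λ*) + D/√T, where λ̄_T = (1/T) Σ_{t=1}^T λ_t and D = m B²/(2K) + K L². -/
open Finset MeasureTheory ProbabilityTheory Real

/-- clamping to [0,B] is a contraction towards points of [0,B] -/
lemma aux_clamp (a c Bb : ℝ) (h0 : 0 ≤ c) (h1 : c ≤ Bb) :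
    (max 0 (min a Bb) - c) ^ 2 ≤ (a - c) ^ 2 := by
  rcases le_total a 0 with h | h
  · rw [min_eq_left (h.trans (h0.trans h1)), max_eq_left h]
    nlinarith
  rcases le_total a Bb with h2 | h2
  · rw [min_eq_left h2, max_eq_right h]
  · rw [min_eq_right h2, max_eq_right (h0.trans h1)]
    nlinarith

lemma aux_sqrtsum : ∀ T : ℕ, (∑ t ∈ Finset.Icc 1 T, 1 / Real.sqrt t) ≤ 2 * Real.sqrt T := by
  intro T
  induction T with
  | zero => simp
  | succ T ih =>
    rw [Finset.sum_Icc_succ_top (by omega)]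
    have hr : (0:ℝ) < Real.sqrt (T+1) := Real.sqrt_pos.2 (by positivity)
    have hs : (0:ℝ) ≤ Real.sqrt T := Real.sqrt_nonneg _
    have hr2 : (Real.sqrt (T+1))^2 = (T:ℝ)+1 := Real.sq_sqrt (by positivity)
    have hs2 : (Real.sqrt T)^2 = (T:ℝ) := Real.sq_sqrt (by positivity)
    have key : 1 / Real.sqrt (T+1) ≤ 2 * Real.sqrt (T+1) - 2 * Real.sqrt T := by
      rw [div_le_iff₀ hr]
      nlinarith [sq_nonneg (Real.sqrt (T+1) - Real.sqrt T)]
    push_cast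
    push_cast at ih key
    linarith

lemma aux_abel (r s : ℕ → ℝ) (C : ℝ) (hr : ∀ t, 1 ≤ t → 0 ≤ r t) (hrC : ∀ t, 1 ≤ t → r t ≤ C)
    (hs : ∀ t, 1 ≤ t → 0 ≤ s t) (hmono : ∀ t, 1 ≤ t → s t ≤ s (t + 1)) :
    ∀ T, 1 ≤ T →
      (∑ t ∈ Finset.Icc 1 T, (r t - r (t + 1)) * s t) + r (T + 1) * s T ≤ C * s T := by
  intro T hT
  induction T, hT using Nat.le_induction with
  | base =>
    simp only [Finset.Icc_self, Finset.sum_singleton]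
    have := hrC 1 le_rfl
    have := hs 1 le_rfl
    nlinarith
  | succ T hT ih =>
    rw [Finset.sum_Icc_succ_top (by omega)]
    have h1 : r (T+1) * s (T+1) - r (T+1) * s T ≤ C * s (T+1) - C * s T := by
      have := hmono T hT
      have := hrC (T+1) (by omega)
      have := hr (T+1) (by omega)
      nlinarith
    nlinarith [ih]

lemma aux_split {α : Type*} (T N : ℕ) (F : (Fin T → Fin N) → α) (Ψ : α → Fin N → ℝ)
    (p : Fin T) (hdep : ∀ v i, F (Function.update v p i) = F v) :
    (N : ℝ) * ∑ v : Fin T → Fin N, Ψ (F v) (v p)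
      = ∑ v : Fin T → Fin N, ∑ i : Fin N, Ψ (F v) i := by
  have hinv : Function.Involutive
      (fun x : (Fin T → Fin N) × Fin N => (Function.update x.1 p x.2, x.1 p)) := by
    intro x
    simp [Function.update_idem]
  have h2 := hinv.bijective.sum_comp (fun x : (Fin T → Fin N) × Fin N => Ψ (F x.1) x.2)
  simp only [hdep] at h2
  have h3 : ∑ v : Fin T → Fin N, ∑ i : Fin N, Ψ (F v) i
      = ∑ x : (Fin T → Fin N) × Fin N, Ψ (F x.1) x.2 :=
    (Fintype.sum_prod_type (f := fun x : (Fin T → Fin N) × Fin N => Ψ (F x.1) x.2)).symm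
  have h4 : ∑ x : (Fin T → Fin N) × Fin N, Ψ (F x.1) (x.1 p)
      = ∑ v : Fin T → Fin N, ∑ _i : Fin N, Ψ (F v) (v p) :=
    Fintype.sum_prod_type (f := fun x : (Fin T → Fin N) × Fin N => Ψ (F x.1) (x.1 p))
  rw [h3, ← h2, h4]
  simp [Finset.sum_const, Finset.card_univ, Finset.mul_sum, mul_comm]

lemma aux_deriv_le (f : ℝ → ℝ) (ε a : ℝ) (hε : 0 < ε)
    (hf : ContDiffOn ℝ 2 f (Set.Ioi (-ε)))
    (ha : ∀ x : ℝ, 0 ≤ x → a ≤ -(deriv (deriv f) x)) :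
    ∀ x : ℝ, 0 ≤ x → deriv f x ≤ deriv f 0 - a * x := by
  have hsub : Set.Ici (0:ℝ) ⊆ Set.Ioi (-ε) := fun x hx => lt_of_lt_of_le (by linarith : -ε < 0) hx
  have hopen : IsOpen (Set.Ioi (-ε)) := isOpen_Ioi
  have hd1 : ContDiffOn ℝ 1 (deriv f) (Set.Ioi (-ε)) := hf.deriv_of_isOpen hopen (by norm_num)
  have hd1' : DifferentiableOn ℝ (deriv f) (Set.Ioi (-ε)) := hd1.differentiableOn one_ne_zero
  have hanti : AntitoneOn (fun y => deriv f y + a * y) (Set.Ici 0) := by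
    apply antitoneOn_of_deriv_nonpos (convex_Ici 0)
    · exact ((hd1.continuousOn).mono hsub).add (continuous_const.mul continuous_id).continuousOn
    · intro y hy
      rw [interior_Ici] at hy
      have hdy : DifferentiableAt ℝ (deriv f) y :=
        hd1'.differentiableAt (hopen.mem_nhds (hsub (Set.mem_Ici.2 (le_of_lt (Set.mem_Ioi.1 hy)))))
      exact (hdy.add ((differentiableAt_fun_id).const_mul a)).differentiableWithinAt
    · intro y hy
      rw [interior_Ici] at hy
      have hdy : DifferentiableAt ℝ (deriv f) y :=
        hd1'.differentiableAt (hopen.mem_nhds (hsub (Set.mem_Ici.2 (le_of_lt (Set.mem_Ioi.1 hy)))))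
      rw [deriv_fun_add hdy ((differentiableAt_fun_id).const_mul a), deriv_const_mul a differentiableAt_fun_id,
        deriv_id'']
      have := ha y (Set.mem_Ioi.1 hy).le
      simp only [mul_one]
      linarith
  intro x hx
  have := hanti (Set.self_mem_Ici) hx hx
  simp only at this
  linarith

lemma aux_concave_lin (f : ℝ → ℝ) (ε : ℝ) (hε : 0 < ε)
    (hf : ContDiffOn ℝ 2 f (Set.Ioi (-ε)))
    (hd : ∀ x : ℝ, 0 ≤ x → deriv f x ≤ deriv f 0) :
    ∀ x : ℝ, 0 ≤ x → f x ≤ f 0 + deriv f 0 * x := by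
  have hsub : Set.Ici (0:ℝ) ⊆ Set.Ioi (-ε) := fun x hx => lt_of_lt_of_le (by linarith : -ε < 0) hx
  have hopen : IsOpen (Set.Ioi (-ε)) := isOpen_Ioi
  have hd' : DifferentiableOn ℝ f (Set.Ioi (-ε)) := hf.differentiableOn (by norm_num)
  have hanti : AntitoneOn (fun y => f y - deriv f 0 * y) (Set.Ici 0) := by
    apply antitoneOn_of_deriv_nonpos (convex_Ici 0)
    · exact ((hd'.continuousOn).mono hsub).sub (continuous_const.mul continuous_id).continuousOn
    · intro y hy
      rw [interior_Ici] at hy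
      have hdy : DifferentiableAt ℝ f y := hd'.differentiableAt (hopen.mem_nhds (hsub (Set.mem_Ici.2 (le_of_lt (Set.mem_Ioi.1 hy)))))
      exact (hdy.sub ((differentiableAt_fun_id).const_mul _)).differentiableWithinAt
    · intro y hy
      rw [interior_Ici] at hy
      have hdy : DifferentiableAt ℝ f y := hd'.differentiableAt (hopen.mem_nhds (hsub (Set.mem_Ici.2 (le_of_lt (Set.mem_Ioi.1 hy)))))
      rw [deriv_fun_sub hdy ((differentiableAt_fun_id).const_mul _),
        deriv_const_mul _ differentiableAt_fun_id, deriv_id'']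
      have := hd y (Set.mem_Ioi.1 hy).le
      simp only [mul_one]
      linarith
  intro x hx
  have := hanti (Set.self_mem_Ici) hx hx
  simp only at this
  linarith

lemma aux_max_le (f : ℝ → ℝ) (ε a Bv d z : ℝ) (hε : 0 < ε) (ha : 0 < a) (hB : 0 ≤ Bv)
    (hd : 0 ≤ d)
    (hf : ContDiffOn ℝ 2 f (Set.Ioi (-ε)))
    (hder : ∀ x : ℝ, 0 ≤ x → deriv f x ≤ Bv - a * x)
    (hz : 0 ≤ z) (hmax : IsMaxOn (fun x => f x - d * x) (Set.Ici 0) z) : z ≤ Bv / a := by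
  by_contra hzM
  push_neg at hzM
  set M := Bv / a with hM
  have hM0 : 0 ≤ M := div_nonneg hB ha.le
  have hsub : Set.Icc M z ⊆ Set.Ioi (-ε) := fun x hx => lt_of_lt_of_le (by linarith) (hM0.trans hx.1)
  have hopen : IsOpen (Set.Ioi (-ε)) := isOpen_Ioi
  have hd' : DifferentiableOn ℝ f (Set.Ioi (-ε)) := hf.differentiableOn (by norm_num)
  have hanti : StrictAntiOn (fun x => f x - d * x) (Set.Icc M z) := by
    apply strictAntiOn_of_deriv_neg (convex_Icc M z)
    · exact ((hd'.continuousOn).mono hsub).sub (continuous_const.mul continuous_id).continuousOn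
    · intro y hy
      rw [interior_Icc] at hy
      have hy0 : 0 ≤ y := hM0.trans hy.1.le
      have hdy : DifferentiableAt ℝ f y :=
        hd'.differentiableAt (hopen.mem_nhds (hsub ⟨hy.1.le, hy.2.le⟩))
      rw [deriv_fun_sub hdy ((differentiableAt_fun_id).const_mul _),
        deriv_const_mul _ differentiableAt_fun_id, deriv_id'']
      have h1 := hder y hy0
      have h2 : Bv - a * y < Bv - a * M := by nlinarith [hy.1]
      have h3 : a * M = Bv := by rw [hM]; field_simp
      simp only [mul_one]
      nlinarith
  have h4 : (fun x => f x - d * x) z < (fun x => f x - d * x) M :=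
    hanti ⟨le_rfl, hzM.le⟩ ⟨hzM.le, le_rfl⟩ hzM
  have h5 := hmax (Set.mem_Ici.2 hM0)
  simp only [Set.mem_setOf_eq] at h5
  exact absurd h5 (not_le.2 h4)

lemma aux_law {Ω : Type} [MeasurableSpace Ω] (μ : Measure Ω) [IsProbabilityMeasure μ]
    (N : ℕ) (hN : 0 < N) (ξ : ℕ → Ω → Fin N) (hξmeas : ∀ t, Measurable (ξ t))
    (hξindep : iIndepFun ξ μ)
    (hξunif : ∀ t, ∀ i : Fin N, μ (ξ t ⁻¹' {i}) = (N : ENNReal)⁻¹)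
    (T : ℕ) (f : (Fin T → Fin N) → ℝ) :
    ∫ ω, f (fun k => ξ ((k : ℕ) + 2) ω) ∂μ
      = (1 / (N : ℝ)) ^ T * ∑ v : Fin T → Fin N, f v := by
  classical
  set A : (Fin T → Fin N) → Set Ω := fun v => ⋂ k : Fin T, ξ ((k : ℕ) + 2) ⁻¹' {v k} with hA
  have hAmeas : ∀ v, MeasurableSet (A v) :=
    fun v => MeasurableSet.iInter fun k => (hξmeas _) (measurableSet_singleton _)
  have hAμ : ∀ v, μ (A v) = ((N : ENNReal)⁻¹) ^ T := by
    intro v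
    set sets : ℕ → Set (Fin N) := fun n => ⋂ (k : Fin T) (_ : (k : ℕ) + 2 = n), {v k} with hsets
    have hmeas_sets : ∀ n, MeasurableSet (sets n) := fun n =>
      MeasurableSet.iInter fun k => MeasurableSet.iInter fun _ => measurableSet_singleton _
    have key := hξindep.measure_inter_preimage_eq_mul
      (S := Finset.image (fun k : Fin T => (k : ℕ) + 2) Finset.univ) (sets := sets)
      (fun i _ => hmeas_sets i)
    have hAEq : (⋂ i ∈ Finset.image (fun k : Fin T => (k : ℕ) + 2) Finset.univ,
        ξ i ⁻¹' sets i) = A v := by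
      ext ω
      simp only [Set.mem_iInter, Finset.mem_image, Finset.mem_univ, true_and, hA, hsets,
        Set.mem_preimage, Set.mem_singleton_iff]
      constructor
      · intro h k
        exact h ((k : ℕ) + 2) ⟨k, rfl⟩ k rfl
      · rintro h i ⟨k, rfl⟩ k' hk'
        have : k' = k := by
          have : (k' : ℕ) = (k : ℕ) := by omega
          exact Fin.ext this
        subst this
        exact h k'
    have hprod : ∏ i ∈ Finset.image (fun k : Fin T => (k : ℕ) + 2) Finset.univ,
        μ (ξ i ⁻¹' sets i) = ((N : ENNReal)⁻¹) ^ T := by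
      rw [Finset.prod_image]
      · have hsv : ∀ k : Fin T, sets ((k : ℕ) + 2) = {v k} := by
          intro k
          ext j
          simp only [hsets, Set.mem_iInter, Set.mem_singleton_iff]
          constructor
          · intro h
            exact h k rfl
          · intro h k' hk'
            have : k' = k := Fin.ext (by omega)
            subst this
            exact h
        calc ∏ k : Fin T, μ (ξ ((k : ℕ) + 2) ⁻¹' sets ((k : ℕ) + 2))
            = ∏ k : Fin T, (N : ENNReal)⁻¹ := by
              refine Finset.prod_congr rfl fun k _ => ?_
              rw [hsv k, hξunif]
          _ = ((N : ENNReal)⁻¹) ^ T := by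
              rw [Finset.prod_const, Finset.card_univ, Fintype.card_fin]
      · intro a _ b _ hab
        have : (a : ℕ) = (b : ℕ) := by simp only at hab; omega
        exact Fin.ext this
    rw [← hAEq, key, hprod]
  have hpt : ∀ ω, f (fun k => ξ ((k : ℕ) + 2) ω)
      = ∑ v : Fin T → Fin N, Set.indicator (A v) (fun _ => f v) ω := by
    intro ω
    have hmem : ∀ v, ω ∈ A v ↔ v = (fun k : Fin T => ξ ((k : ℕ) + 2) ω) := by
      intro v
      simp only [hA, Set.mem_iInter, Set.mem_preimage, Set.mem_singleton_iff, funext_iff]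
      constructor
      · intro h k
        exact (h k).symm
      · intro h k
        exact (h k).symm
    rw [Finset.sum_eq_single (fun k : Fin T => ξ ((k : ℕ) + 2) ω)]
    · rw [Set.indicator_of_mem ((hmem _).2 rfl)]
    · intro v _ hv
      rw [Set.indicator_of_notMem (fun hc => hv ((hmem v).1 hc))]
    · intro habs
      exact absurd (Finset.mem_univ _) habs
  have h1 : (∫ ω, f (fun k => ξ ((k : ℕ) + 2) ω) ∂μ)
      = ∫ ω, (∑ v : Fin T → Fin N, Set.indicator (A v) (fun _ => f v) ω) ∂μ :=
    integral_congr_ae (Filter.Eventually.of_forall hpt)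
  rw [h1, integral_finset_sum _ (fun v _ => (integrable_const (f v)).indicator (hAmeas v))]
  have h2 : ∀ v : Fin T → Fin N,
      (∫ ω, Set.indicator (A v) (fun _ => f v) ω ∂μ) = (1 / (N : ℝ)) ^ T * f v := by
    intro v
    rw [integral_indicator_const _ (hAmeas v), measureReal_def, hAμ v, smul_eq_mul]
    congr 1
    rw [ENNReal.toReal_pow, ENNReal.toReal_inv, ENNReal.toReal_natCast, one_div]
  rw [Finset.sum_congr rfl (fun v _ => h2 v), ← Finset.mul_sum]
-- MAIN THEOREM SKELETON (appended to aux lemmas when testing)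
set_option maxHeartbeats 1000000 in
theorem stmt10
    (m N : ℕ) (hm : 0 < m) (hN : 0 < N)
    (R : Fin m → Fin N → ℝ)
    (hR01 : ∀ j i, R j i = 0 ∨ R j i = 1)
    (hRcol : ∀ i, ∃ j, R j i = 1)
    (b : Fin m → ℝ) (hb : ∀ j, 0 < b j)
    (B σ ε : ℝ) (hB : 0 < B) (hσ : 0 < σ) (hε : 0 < ε)
    (u : Fin N → ℝ → ℝ)
    (hu_smooth : ∀ i, ContDiffOn ℝ 2 (u i) (Set.Ioi (-ε)))
    (hu0 : ∀ i, u i 0 = 0)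
    (hu'pos : ∀ i, 0 < deriv (u i) 0)
    (hu'le : ∀ i, deriv (u i) 0 ≤ B)
    (hu'' : ∀ i, ∀ x : ℝ, 0 ≤ x → (N : ℝ) * σ ≤ -(deriv (deriv (u i)) x))
    (xbar : (Fin m → ℝ) → Fin N → ℝ)
    (hxbar : ∀ lam : Fin m → ℝ, (∀ j, 0 ≤ lam j) → ∀ i : Fin N,
      0 ≤ xbar lam i ∧
      IsMaxOn (fun x : ℝ => u i x - (∑ j, lam j * R j i) * x) (Set.Ici 0) (xbar lam i) ∧
      ∀ y : ℝ, 0 ≤ y →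
        IsMaxOn (fun x : ℝ => u i x - (∑ j, lam j * R j i) * x) (Set.Ici 0) y →
        y = xbar lam i)
    (q : (Fin m → ℝ) → ℝ)
    (hq : ∀ lam : Fin m → ℝ, q lam = sSup ((fun x : Fin N → ℝ =>
      (∑ i, u i (x i)) + ∑ j, lam j * (b j - ∑ i, R j i * x i)) ''
      {x : Fin N → ℝ | ∀ i, 0 ≤ x i}))
    (lamStar : Fin m → ℝ) (hlamStar0 : ∀ j, 0 ≤ lamStar j)
    (hlamStarOpt : ∀ lam : Fin m → ℝ, (∀ j, 0 ≤ lam j) → q lamStar ≤ q lam)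
    {Ω : Type} [MeasurableSpace Ω] (μ : Measure Ω) [IsProbabilityMeasure μ]
    (ξ : ℕ → Ω → Fin N) (hξmeas : ∀ t, Measurable (ξ t))
    (hξindep : iIndepFun ξ μ)
    (hξunif : ∀ t, ∀ i : Fin N, μ (ξ t ⁻¹' {i}) = (N : ENNReal)⁻¹)
    (η : ℕ → ℝ) (hηpos : ∀ t, 1 ≤ t → 0 < η t)
    (lamSeq : ℕ → Ω → Fin m → ℝ) (lamInit : Fin m → ℝ)
    (hlamInit : ∀ j, lamInit j ∈ Set.Icc (0 : ℝ) B)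
    (hinit : ∀ ω, lamSeq 1 ω = lamInit)
    (hrec : ∀ t, 1 ≤ t → ∀ ω, ∀ j, lamSeq (t + 1) ω j =
      max 0 (min (lamSeq t ω j
        - η t * (b j - (N : ℝ) * R j (ξ (t + 1) ω) * xbar (lamSeq t ω) (ξ (t + 1) ω))) B))
    (L : ℝ) (hL : L = Real.sqrt (∑ j, (max (b j) (B / σ - b j)) ^ 2))
    (K : ℝ) (hK : 0 < K) (hη : ∀ t : ℕ, 1 ≤ t → η t = K / Real.sqrt t)
    (D : ℝ) (hD : D = m * B ^ 2 / (2 * K) + K * L ^ 2)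
    : ∀ T : ℕ, 1 ≤ T →
      ∫ ω, q (fun j => (1 / (T : ℝ)) * ∑ t ∈ Finset.Icc 1 T, lamSeq t ω j) ∂μ ≤
        q lamStar + D / Real.sqrt T := by
  classical
  intro T hT
  have hN' : (0:ℝ) < N := by exact_mod_cast hN
  have hT' : (0:ℝ) < T := by exact_mod_cast hT
  have hNσ : (0:ℝ) < (N : ℝ) * σ := by positivity
  have hsT : (0:ℝ) < Real.sqrt T := Real.sqrt_pos.2 hT'
  have hRnn : ∀ j i, 0 ≤ R j i := by
    intro j i; rcases hR01 j i with h | h <;> rw [h] <;> norm_num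
  have hcnn : ∀ (lam : Fin m → ℝ), (∀ j, 0 ≤ lam j) → ∀ i, 0 ≤ ∑ j, lam j * R j i :=
    fun lam hl i => Finset.sum_nonneg fun j _ => mul_nonneg (hl j) (hRnn j i)
  -- derivative and utility bounds
  have hder : ∀ i, ∀ x : ℝ, 0 ≤ x → deriv (u i) x ≤ B - ((N:ℝ)*σ) * x := by
    intro i x hx
    have h1 := aux_deriv_le (u i) ε ((N:ℝ)*σ) hε (hu_smooth i) (hu'' i) x hx
    have h2 := hu'le i
    linarith
  have hulin : ∀ i, ∀ x : ℝ, 0 ≤ x → u i x ≤ B * x := by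
    intro i x hx
    have h2 := aux_concave_lin (u i) ε hε (hu_smooth i) (fun y hy => by
      have := aux_deriv_le (u i) ε ((N:ℝ)*σ) hε (hu_smooth i) (hu'' i) y hy
      nlinarith) x hx
    rw [hu0 i] at h2
    nlinarith [mul_le_mul_of_nonneg_right (hu'le i) hx]
  -- xbar bound
  have hxb : ∀ (lam : Fin m → ℝ), (∀ j, 0 ≤ lam j) → ∀ i, xbar lam i ≤ B / ((N:ℝ)*σ) := by
    intro lam hl i
    obtain ⟨hge, hmax, -⟩ := hxbar lam hl i
    exact aux_max_le (u i) ε ((N:ℝ)*σ) B (∑ j, lam j * R j i) (xbar lam i) hε hNσ hB.le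
      (hcnn lam hl i) (hu_smooth i) (hder i) hge hmax
  -- objective algebra
  have hobj : ∀ (lam : Fin m → ℝ) (x : Fin N → ℝ),
      ((∑ i, u i (x i)) + ∑ j, lam j * (b j - ∑ i, R j i * x i))
      = (∑ i, (u i (x i) - (∑ j, lam j * R j i) * x i)) + ∑ j, lam j * b j := by
    intro lam x
    simp only [mul_sub, Finset.sum_sub_distrib, Finset.mul_sum, Finset.sum_mul, mul_assoc]
    rw [Finset.sum_comm]
    ring
  -- q evaluation and upper bound property
  have hgreat : ∀ (lam : Fin m → ℝ), (∀ j, 0 ≤ lam j) →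
      IsGreatest ((fun x : Fin N → ℝ =>
        (∑ i, u i (x i)) + ∑ j, lam j * (b j - ∑ i, R j i * x i)) ''
        {x : Fin N → ℝ | ∀ i, 0 ≤ x i})
        ((∑ i, u i (xbar lam i)) + ∑ j, lam j * (b j - ∑ i, R j i * xbar lam i)) := by
    intro lam hl
    constructor
    · exact ⟨xbar lam, fun i => (hxbar lam hl i).1, rfl⟩
    · rintro y ⟨x, hx, rfl⟩
      simp only
      rw [hobj, hobj]
      have hterm : ∀ i ∈ Finset.univ, u i (x i) - (∑ j, lam j * R j i) * x i
          ≤ u i (xbar lam i) - (∑ j, lam j * R j i) * xbar lam i :=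
        fun i _ => (hxbar lam hl i).2.1 (Set.mem_Ici.2 (hx i))
      have hs := Finset.sum_le_sum hterm
      linarith
  have hqeq : ∀ (lam : Fin m → ℝ), (∀ j, 0 ≤ lam j) →
      q lam = (∑ i, u i (xbar lam i)) + ∑ j, lam j * (b j - ∑ i, R j i * xbar lam i) := by
    intro lam hl
    rw [hq lam]
    exact (hgreat lam hl).csSup_eq
  have hqge : ∀ (lam : Fin m → ℝ), (∀ j, 0 ≤ lam j) → ∀ x : Fin N → ℝ, (∀ i, 0 ≤ x i) →
      ((∑ i, u i (x i)) + ∑ j, lam j * (b j - ∑ i, R j i * x i)) ≤ q lam := by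
    intro lam hl x hx
    rw [hq lam]
    exact le_csSup (hgreat lam hl).bddAbove ⟨x, hx, rfl⟩
  -- subgradient inequality
  have hsub : ∀ (lam lam' : Fin m → ℝ), (∀ j, 0 ≤ lam j) → (∀ j, 0 ≤ lam' j) →
      q lam - q lam' ≤ ∑ j, (lam j - lam' j) * (b j - ∑ i, R j i * xbar lam i) := by
    intro lam lam' hl hl'
    have h1 := hqeq lam hl
    have h2 := hqge lam' hl' (xbar lam) (fun i => (hxbar lam hl i).1)
    have h3 : ∑ j, (lam j - lam' j) * (b j - ∑ i, R j i * xbar lam i)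
        = (∑ j, lam j * (b j - ∑ i, R j i * xbar lam i))
          - ∑ j, lam' j * (b j - ∑ i, R j i * xbar lam i) := by
      rw [← Finset.sum_sub_distrib]
      exact Finset.sum_congr rfl fun j _ => by ring
    linarith
  -- the projected optimum
  set lamOpt : Fin m → ℝ := fun j => min (lamStar j) B with hlamOpt
  have hopt0 : ∀ j, 0 ≤ lamOpt j := fun j => le_min (hlamStar0 j) hB.le
  have hoptB : ∀ j, lamOpt j ≤ B := fun j => min_le_right _ _
  have hqopt : q lamOpt ≤ q lamStar := by
    have h := hsub lamOpt lamStar hopt0 hlamStar0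
    have hterm : ∀ j ∈ Finset.univ,
        (lamOpt j - lamStar j) * (b j - ∑ i, R j i * xbar lamOpt i) ≤ 0 := by
      intro j _
      rcases le_or_gt (lamStar j) B with hc | hc
      · have hmin : lamOpt j = lamStar j := min_eq_left hc
        rw [hmin, sub_self, zero_mul]
      · have hmin : lamOpt j = B := min_eq_right hc.le
        have hzero : ∀ i, R j i * xbar lamOpt i = 0 := by
          intro i
          rcases hR01 j i with h0 | h1
          · rw [h0, zero_mul]
          · have hcB : B ≤ ∑ k, lamOpt k * R k i := by
              calc B = lamOpt j * R j i := by rw [hmin, h1, mul_one]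
                _ ≤ ∑ k, lamOpt k * R k i :=
                    Finset.single_le_sum (f := fun k => lamOpt k * R k i)
                      (fun k _ => mul_nonneg (hopt0 k) (hRnn k i)) (Finset.mem_univ j)
            have hmax0 : IsMaxOn (fun x : ℝ => u i x - (∑ k, lamOpt k * R k i) * x)
                (Set.Ici 0) 0 := by
              intro x hx
              have hx0 : (0:ℝ) ≤ x := hx
              have h4 := hulin i x hx0
              have h5 : B * x ≤ (∑ k, lamOpt k * R k i) * x :=
                mul_le_mul_of_nonneg_right hcB hx0
              simp only [Set.mem_setOf_eq, hu0 i, mul_zero, sub_zero]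
              linarith
            have h6 := (hxbar lamOpt hopt0 i).2.2 0 le_rfl hmax0
            rw [h1, one_mul, ← h6]
        have hsum0 : ∑ i, R j i * xbar lamOpt i = 0 := Finset.sum_eq_zero fun i _ => hzero i
        rw [hsum0, sub_zero, hmin]
        have := hb j
        nlinarith
    have h7 : ∑ j, (lamOpt j - lamStar j) * (b j - ∑ i, R j i * xbar lamOpt i) ≤ 0 :=
      Finset.sum_nonpos fun j hj => hterm j hj
    linarith
  -- gradient bound
  have hL2 : L ^ 2 = ∑ j, (max (b j) (B / σ - b j)) ^ 2 := by
    rw [hL]; exact Real.sq_sqrt (Finset.sum_nonneg fun j _ => sq_nonneg _)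
  have hgrad : ∀ (lam : Fin m → ℝ), (∀ j, 0 ≤ lam j) → ∀ i,
      ∑ j, (b j - (N:ℝ) * R j i * xbar lam i) ^ 2 ≤ L ^ 2 := by
    intro lam hl i
    rw [hL2]
    apply Finset.sum_le_sum
    intro j _
    have hxnn := (hxbar lam hl i).1
    have hxle := hxb lam hl i
    rcases hR01 j i with h0 | h1
    · rw [h0, mul_zero, zero_mul, sub_zero]
      exact pow_le_pow_left₀ (hb j).le (le_max_left _ _) 2
    · rw [h1, mul_one]
      have h2 : (N:ℝ) * xbar lam i ≤ B / σ := by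
        have h3 := mul_le_mul_of_nonneg_left hxle (le_of_lt hN')
        have h4 : (N:ℝ) * (B / ((N:ℝ)*σ)) = B / σ := by
          field_simp
        linarith
      have h5 : (0:ℝ) ≤ (N:ℝ) * xbar lam i := mul_nonneg hN'.le hxnn
      apply sq_le_sq'
      · have := le_max_right (b j) (B / σ - b j)
        linarith
      · have := le_max_left (b j) (B / σ - b j)
        linarith
  -- deterministic recursion function
  obtain ⟨G, hG0, hGS⟩ : ∃ G : ℕ → (ℕ → Fin N) → Fin m → ℝ,
      (∀ w, G 0 w = lamInit) ∧ ∀ k w, G (k+1) w = fun j =>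
        max 0 (min (G k w j - η (k+1) * (b j - (N:ℝ) * R j (w k) * xbar (G k w) (w k))) B) :=
    ⟨fun t => Nat.rec (motive := fun _ => (ℕ → Fin N) → Fin m → ℝ) (fun _ => lamInit)
      (fun k ih w j =>
        max 0 (min (ih w j - η (k+1) * (b j - (N:ℝ) * R j (w k) * xbar (ih w) (w k))) B)) t,
      fun _ => rfl, fun _ _ => rfl⟩
  have hrep : ∀ t (ω : Ω), lamSeq (t+1) ω = G t (fun k => ξ (k+2) ω) := by
    intro t
    induction t with
    | zero => intro ω; rw [hG0]; exact hinit ω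
    | succ t ih =>
      intro ω
      funext j
      simp only [hGS]
      have h1 := hrec (t+1) (by omega) ω j
      rw [h1, ih ω]
  have hGmem : ∀ t w j, 0 ≤ G t w j ∧ G t w j ≤ B := by
    intro t
    induction t with
    | zero =>
      intro w j
      rw [hG0]
      exact ⟨(hlamInit j).1, (hlamInit j).2⟩
    | succ t ih =>
      intro w j
      simp only [hGS]
      exact ⟨le_max_left _ _, max_le hB.le (min_le_right _ _)⟩
  have hGdep : ∀ t (w w' : ℕ → Fin N), (∀ k, k < t → w k = w' k) → G t w = G t w' := by
    intro t
    induction t with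
    | zero => intro w w' _; rw [hG0, hG0]
    | succ t ih =>
      intro w w' h
      have h1 : G t w = G t w' := ih w w' (fun k hk => h k (by omega))
      have h2 : w t = w' t := h t (by omega)
      rw [hGS, hGS, h1, h2]
  -- descent inequality
  have hdesc : ∀ t, 1 ≤ t → ∀ w : ℕ → Fin N,
      ∑ j, (G t w j - lamOpt j)^2 ≤ (∑ j, (G (t-1) w j - lamOpt j)^2)
        - 2 * η t * (∑ j, (G (t-1) w j - lamOpt j)
            * (b j - (N:ℝ) * R j (w (t-1)) * xbar (G (t-1) w) (w (t-1))))
        + η t ^ 2 * L ^ 2 := by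
    intro t ht w
    obtain ⟨s, rfl⟩ : ∃ s, t = s + 1 := ⟨t - 1, by omega⟩
    simp only [Nat.add_sub_cancel]
    have h1 : ∀ j ∈ Finset.univ, (G (s+1) w j - lamOpt j)^2 ≤
        ((G s w j - η (s+1) * (b j - (N:ℝ) * R j (w s) * xbar (G s w) (w s))) - lamOpt j)^2 := by
      intro j _
      simp only [hGS]
      exact aux_clamp _ _ _ (hopt0 j) (hoptB j)
    have h2 := Finset.sum_le_sum h1
    have h3 : ∑ j, ((G s w j - η (s+1) * (b j - (N:ℝ) * R j (w s) * xbar (G s w) (w s)))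
          - lamOpt j)^2
        = (∑ j, (G s w j - lamOpt j)^2)
          - 2 * η (s+1) * (∑ j, (G s w j - lamOpt j)
              * (b j - (N:ℝ) * R j (w s) * xbar (G s w) (w s)))
          + η (s+1)^2 * (∑ j, (b j - (N:ℝ) * R j (w s) * xbar (G s w) (w s))^2) := by
      rw [Finset.mul_sum, Finset.mul_sum, ← Finset.sum_sub_distrib, ← Finset.sum_add_distrib]
      exact Finset.sum_congr rfl fun j _ => by ring
    have h4 := hgrad (G s w) (fun j => (hGmem s w j).1) (w s)
    have h5 : η (s+1)^2 * (∑ j, (b j - (N:ℝ)*R j (w s) * xbar (G s w) (w s))^2)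
        ≤ η (s+1)^2 * L^2 := mul_le_mul_of_nonneg_left h4 (sq_nonneg _)
    linarith
  -- finite-tuple world
  have hextlt : ∀ (v : Fin T → Fin N) (k : ℕ) (h : k < T),
      (fun k' : ℕ => if h' : k' < T then v ⟨k', h'⟩ else ⟨0, hN⟩) k = v ⟨k, h⟩ := by
    intro v k h
    simp [h]
  set ext : (Fin T → Fin N) → (ℕ → Fin N) :=
    fun v k => if h : k < T then v ⟨k, h⟩ else ⟨0, hN⟩ with hext
  have hcard : ∀ c : ℝ, (∑ _v : Fin T → Fin N, c) = (N:ℝ)^T * c := by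
    intro c
    rw [Finset.sum_const, Finset.card_univ]
    simp [nsmul_eq_mul]
  have hstep : ∀ t, 1 ≤ t → t ≤ T →
      (∑ v : Fin T → Fin N, q (G (t-1) (ext v)))
        ≤ (N:ℝ)^T * q lamOpt
          + (∑ v : Fin T → Fin N, ((∑ j, (G (t-1) (ext v) j - lamOpt j)^2)
              - ∑ j, (G t (ext v) j - lamOpt j)^2)) * (1/(2 * η t))
          + (N:ℝ)^T * (η t * L^2 / 2) := by
    intro t ht1 htT
    set p : Fin T := ⟨t-1, by omega⟩ with hp
    have hdep : ∀ (v : Fin T → Fin N) (i : Fin N),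
        G (t-1) (ext (Function.update v p i)) = G (t-1) (ext v) := by
      intro v i
      apply hGdep
      intro k hk
      have hkT : k < T := by omega
      have hne : (⟨k, hkT⟩ : Fin T) ≠ p := by
        simp only [hp, ne_eq, Fin.mk.injEq]
        omega
      show ext (Function.update v p i) k = ext v k
      rw [hext]
      simp only [hkT, dif_pos]
      rw [Function.update_of_ne hne]
    have hsplit := aux_split T N (fun v => G (t-1) (ext v))
      (fun lam i => ∑ j, (lam j - lamOpt j) * (b j - (N:ℝ) * R j i * xbar lam i)) p hdep
    have havg : ∀ (lam : Fin m → ℝ),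
        (∑ i, ∑ j, (lam j - lamOpt j) * (b j - (N:ℝ) * R j i * xbar lam i))
          = (N:ℝ) * ∑ j, (lam j - lamOpt j) * (b j - ∑ i, R j i * xbar lam i) := by
      intro lam
      rw [Finset.sum_comm, Finset.mul_sum]
      refine Finset.sum_congr rfl fun j _ => ?_
      rw [← Finset.mul_sum]
      have h2 : ∑ i : Fin N, (b j - (N:ℝ) * R j i * xbar lam i)
          = (N:ℝ) * b j - (N:ℝ) * ∑ i, R j i * xbar lam i := by
        rw [Finset.sum_sub_distrib, Finset.sum_const, Finset.card_univ, Fintype.card_fin,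
          Finset.mul_sum, nsmul_eq_mul]
        congr 1
        exact Finset.sum_congr rfl fun i _ => by ring
      rw [h2]
      ring
    have hsub' : ∀ v : Fin T → Fin N,
        q (G (t-1) (ext v)) - q lamOpt
          ≤ ∑ j, (G (t-1) (ext v) j - lamOpt j)
              * (b j - ∑ i, R j i * xbar (G (t-1) (ext v)) i) :=
      fun v => hsub _ lamOpt (fun j => (hGmem _ _ j).1) hopt0
    -- identify the two sums via the splitting identity
    have hkey : (∑ v : Fin T → Fin N, ∑ j, (G (t-1) (ext v) j - lamOpt j)
          * (b j - ∑ i, R j i * xbar (G (t-1) (ext v)) i))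
        = ∑ v : Fin T → Fin N, ∑ j, (G (t-1) (ext v) j - lamOpt j)
            * (b j - (N:ℝ) * R j (v p) * xbar (G (t-1) (ext v)) (v p)) := by
      have hN0 : (N:ℝ) ≠ 0 := ne_of_gt hN'
      apply mul_left_cancel₀ hN0
      rw [hsplit]
      rw [Finset.mul_sum]
      exact Finset.sum_congr rfl fun v _ => (havg _).symm
    have hη' := hηpos t ht1
    have hpt : ∀ v : Fin T → Fin N,
        (∑ j, (G (t-1) (ext v) j - lamOpt j)
            * (b j - (N:ℝ) * R j (v p) * xbar (G (t-1) (ext v)) (v p)))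
          ≤ ((∑ j, (G (t-1) (ext v) j - lamOpt j)^2) - ∑ j, (G t (ext v) j - lamOpt j)^2)
              * (1/(2*η t)) + η t * L^2/2 := by
      intro v
      have hd := hdesc t ht1 (ext v)
      have hw : ext v (t-1) = v p := by
        rw [hext]
        simp only [hextlt v (t-1) (by omega : t-1 < T)]
        rfl
      rw [hw] at hd
      have h2η : (0:ℝ) < 2 * η t := by linarith
      have hdiv : (∑ j, (G (t-1) (ext v) j - lamOpt j)
            * (b j - (N:ℝ) * R j (v p) * xbar (G (t-1) (ext v)) (v p)))
          ≤ ((∑ j, (G (t-1) (ext v) j - lamOpt j)^2) - (∑ j, (G t (ext v) j - lamOpt j)^2)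
              + η t^2 * L^2) / (2 * η t) := by
        rw [le_div_iff₀ h2η]
        nlinarith [hd]
      calc (∑ j, (G (t-1) (ext v) j - lamOpt j)
            * (b j - (N:ℝ) * R j (v p) * xbar (G (t-1) (ext v)) (v p))) ≤ _ := hdiv
        _ = ((∑ j, (G (t-1) (ext v) j - lamOpt j)^2) - ∑ j, (G t (ext v) j - lamOpt j)^2)
              * (1/(2*η t)) + η t * L^2/2 := by
            field_simp
    have hchain : (∑ v : Fin T → Fin N, (q (G (t-1) (ext v)) - q lamOpt))
        ≤ ∑ v : Fin T → Fin N,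
            (((∑ j, (G (t-1) (ext v) j - lamOpt j)^2) - ∑ j, (G t (ext v) j - lamOpt j)^2)
              * (1/(2*η t)) + η t * L^2/2) := by
      calc (∑ v : Fin T → Fin N, (q (G (t-1) (ext v)) - q lamOpt))
          ≤ ∑ v : Fin T → Fin N, ∑ j, (G (t-1) (ext v) j - lamOpt j)
              * (b j - ∑ i, R j i * xbar (G (t-1) (ext v)) i) :=
            Finset.sum_le_sum fun v _ => hsub' v
        _ = ∑ v : Fin T → Fin N, ∑ j, (G (t-1) (ext v) j - lamOpt j)
              * (b j - (N:ℝ) * R j (v p) * xbar (G (t-1) (ext v)) (v p)) := hkey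
        _ ≤ _ := Finset.sum_le_sum fun v _ => hpt v
    rw [Finset.sum_sub_distrib] at hchain
    rw [Finset.sum_add_distrib, ← Finset.sum_mul] at hchain
    have hc1 := hcard (q lamOpt)
    have hc2 := hcard (η t * L^2/2)
    linarith
  -- bounds on the squared distances
  have hrbd : ∀ t (v : Fin T → Fin N),
      0 ≤ (∑ j, (G t (ext v) j - lamOpt j)^2) ∧
      (∑ j, (G t (ext v) j - lamOpt j)^2) ≤ m * B^2 := by
    intro t v
    refine ⟨Finset.sum_nonneg fun j _ => sq_nonneg _, ?_⟩
    calc (∑ j, (G t (ext v) j - lamOpt j)^2) ≤ ∑ _j : Fin m, B^2 := by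
          apply Finset.sum_le_sum
          intro j _
          have h1 := hGmem t (ext v) j
          have h2 := hopt0 j
          have h3 := hoptB j
          apply sq_le_sq' <;> linarith
      _ = m * B^2 := by rw [Finset.sum_const, Finset.card_univ, Fintype.card_fin, nsmul_eq_mul]
  -- Abel summation per tuple
  set sfun : ℕ → ℝ := fun t => Real.sqrt t / (2*K) with hsfun
  have hseq : ∀ t : ℕ, 1 ≤ t → 1/(2 * η t) = sfun t := by
    intro t ht
    have ht' : (0:ℝ) < t := by exact_mod_cast ht
    have hst : (0:ℝ) < Real.sqrt t := Real.sqrt_pos.2 ht'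
    rw [hη t ht, hsfun]
    field_simp
  have habel : ∀ v : Fin T → Fin N,
      (∑ t ∈ Finset.Icc 1 T, ((∑ j, (G (t-1) (ext v) j - lamOpt j)^2)
          - ∑ j, (G t (ext v) j - lamOpt j)^2) * (1/(2 * η t)))
        ≤ m * B^2 * (Real.sqrt T / (2*K)) := by
    intro v
    have h1 : ∀ t ∈ Finset.Icc 1 T, ((∑ j, (G (t-1) (ext v) j - lamOpt j)^2)
        - ∑ j, (G t (ext v) j - lamOpt j)^2) * (1/(2 * η t))
        = ((fun t' => ∑ j, (G (t'-1) (ext v) j - lamOpt j)^2) t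
            - (fun t' => ∑ j, (G (t'-1) (ext v) j - lamOpt j)^2) (t+1)) * sfun t := by
      intro t ht
      rw [Finset.mem_Icc] at ht
      rw [hseq t ht.1]
      simp only [Nat.add_sub_cancel]
    rw [Finset.sum_congr rfl h1]
    have hab := aux_abel (fun t' => ∑ j, (G (t'-1) (ext v) j - lamOpt j)^2) sfun (m * B^2)
      (fun t _ => (hrbd (t-1) v).1) (fun t _ => (hrbd (t-1) v).2)
      (fun t _ => by simp only [hsfun]; positivity)
      (fun t _ => by
        simp only [hsfun]
        have hmono : Real.sqrt t ≤ Real.sqrt ((t:ℕ)+1 : ℕ) :=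
          Real.sqrt_le_sqrt (by push_cast; linarith)
        exact (div_le_div_iff_of_pos_right (by positivity)).2 hmono) T hT
    have hnn : 0 ≤ (fun t' => ∑ j, (G (t'-1) (ext v) j - lamOpt j)^2) (T+1) * sfun T := by
      apply mul_nonneg
      · exact (hrbd T v).1
      · simp only [hsfun]; positivity
    have hsT' : sfun T = Real.sqrt T / (2*K) := rfl
    linarith
  -- step size sum
  have hetasum : (∑ t ∈ Finset.Icc 1 T, η t) ≤ 2 * K * Real.sqrt T := by
    have h1 : ∀ t ∈ Finset.Icc 1 T, η t = K * (1/Real.sqrt t) := by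
      intro t ht
      rw [Finset.mem_Icc] at ht
      rw [hη t ht.1]
      ring
    rw [Finset.sum_congr rfl h1, ← Finset.mul_sum]
    have h2 := aux_sqrtsum T
    calc K * (∑ t ∈ Finset.Icc 1 T, 1/Real.sqrt t) ≤ K * (2 * Real.sqrt T) :=
          mul_le_mul_of_nonneg_left h2 hK.le
      _ = 2 * K * Real.sqrt T := by ring
  -- middle term bound
  have hmid : (∑ t ∈ Finset.Icc 1 T, (∑ v : Fin T → Fin N,
        ((∑ j, (G (t-1) (ext v) j - lamOpt j)^2)
          - ∑ j, (G t (ext v) j - lamOpt j)^2)) * (1/(2 * η t)))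
      ≤ (N:ℝ)^T * (m * B^2 * (Real.sqrt T/(2*K))) := by
    have h1 : ∀ t ∈ Finset.Icc 1 T, (∑ v : Fin T → Fin N,
        ((∑ j, (G (t-1) (ext v) j - lamOpt j)^2)
          - ∑ j, (G t (ext v) j - lamOpt j)^2)) * (1/(2 * η t))
        = ∑ v : Fin T → Fin N, ((∑ j, (G (t-1) (ext v) j - lamOpt j)^2)
          - ∑ j, (G t (ext v) j - lamOpt j)^2) * (1/(2 * η t)) :=
      fun t _ => Finset.sum_mul _ _ _
    rw [Finset.sum_congr rfl h1, Finset.sum_comm]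
    calc (∑ v : Fin T → Fin N, ∑ t ∈ Finset.Icc 1 T,
          ((∑ j, (G (t-1) (ext v) j - lamOpt j)^2)
            - ∑ j, (G t (ext v) j - lamOpt j)^2) * (1/(2 * η t)))
        ≤ ∑ _v : Fin T → Fin N, m * B^2 * (Real.sqrt T/(2*K)) :=
          Finset.sum_le_sum fun v _ => habel v
      _ = (N:ℝ)^T * (m * B^2 * (Real.sqrt T/(2*K))) := hcard _
  -- total bound
  have htotal : (∑ t ∈ Finset.Icc 1 T, ∑ v : Fin T → Fin N, q (G (t-1) (ext v)))
      ≤ (N:ℝ)^T * ((T:ℝ) * q lamOpt + D * Real.sqrt T) := by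
    have hs1 := Finset.sum_le_sum
      (fun t ht => hstep t ((Finset.mem_Icc.1 ht).1) ((Finset.mem_Icc.1 ht).2))
    rw [Finset.sum_add_distrib, Finset.sum_add_distrib, Finset.sum_const, Nat.card_Icc] at hs1
    simp only [Nat.add_sub_cancel, nsmul_eq_mul] at hs1
    have h3 : (∑ t ∈ Finset.Icc 1 T, (N:ℝ)^T * (η t * L^2/2))
        = (N:ℝ)^T * (L^2/2) * (∑ t ∈ Finset.Icc 1 T, η t) := by
      rw [Finset.mul_sum]
      exact Finset.sum_congr rfl fun t _ => by ring
    rw [h3] at hs1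
    have hL2nn : (0:ℝ) ≤ L^2 := sq_nonneg L
    have h4 : (N:ℝ)^T * (L^2/2) * (∑ t ∈ Finset.Icc 1 T, η t)
        ≤ (N:ℝ)^T * (L^2/2) * (2*K*Real.sqrt T) :=
      mul_le_mul_of_nonneg_left hetasum (by positivity)
    have hiden : (N:ℝ)^T * ((T:ℝ) * q lamOpt + D * Real.sqrt T)
        = (T:ℝ) * ((N:ℝ)^T * q lamOpt) + (N:ℝ)^T * (m*B^2*(Real.sqrt T/(2*K)))
          + (N:ℝ)^T * (L^2/2) * (2*K*Real.sqrt T) := by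
      rw [hD]
      field_simp
      ring
    linarith
  -- Jensen inequality for the average multiplier
  have hjensen : ∀ v : Fin T → Fin N,
      q (fun j => (1/(T:ℝ)) * ∑ t ∈ Finset.Icc 1 T, G (t-1) (ext v) j)
        ≤ (1/(T:ℝ)) * ∑ t ∈ Finset.Icc 1 T, q (G (t-1) (ext v)) := by
    intro v
    set lav : Fin m → ℝ := fun j => (1/(T:ℝ)) * ∑ t ∈ Finset.Icc 1 T, G (t-1) (ext v) j
      with hlav
    have hlav0 : ∀ j, 0 ≤ lav j := fun j => mul_nonneg (by positivity)
      (Finset.sum_nonneg fun t _ => (hGmem _ _ j).1)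
    have hx : ∀ i, 0 ≤ xbar lav i := fun i => (hxbar lav hlav0 i).1
    have hTcard : ((Finset.Icc 1 T).card : ℝ) = (T:ℝ) := by
      rw [Nat.card_Icc]
      norm_num
    have hdec : ((∑ i, u i (xbar lav i)) + ∑ j, lav j * (b j - ∑ i, R j i * xbar lav i))
        = (1/(T:ℝ)) * ∑ t ∈ Finset.Icc 1 T, ((∑ i, u i (xbar lav i))
            + ∑ j, (G (t-1) (ext v)) j * (b j - ∑ i, R j i * xbar lav i)) := by
      rw [Finset.sum_add_distrib, Finset.sum_const, mul_add, nsmul_eq_mul, hTcard]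
      have hA : (1/(T:ℝ)) * ((T:ℝ) * (∑ i, u i (xbar lav i))) = ∑ i, u i (xbar lav i) := by
        field_simp
      rw [hA]
      congr 1
      rw [Finset.sum_comm, Finset.mul_sum]
      refine Finset.sum_congr rfl fun j _ => ?_
      rw [← Finset.sum_mul, hlav]
      ring
    have hle : ∀ t ∈ Finset.Icc 1 T,
        ((∑ i, u i (xbar lav i)) + ∑ j, (G (t-1) (ext v)) j * (b j - ∑ i, R j i * xbar lav i))
          ≤ q (G (t-1) (ext v)) :=
      fun t _ => hqge _ (fun j => (hGmem _ _ j).1) (xbar lav) hx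
    calc q lav = _ := hqeq lav hlav0
      _ = (1/(T:ℝ)) * ∑ t ∈ Finset.Icc 1 T, ((∑ i, u i (xbar lav i))
            + ∑ j, (G (t-1) (ext v)) j * (b j - ∑ i, R j i * xbar lav i)) := hdec
      _ ≤ (1/(T:ℝ)) * ∑ t ∈ Finset.Icc 1 T, q (G (t-1) (ext v)) :=
          mul_le_mul_of_nonneg_left (Finset.sum_le_sum hle) (by positivity)
  -- rewrite the integrand via the deterministic recursion
  have hintrep : ∀ ω : Ω, (fun j => (1 / (T : ℝ)) * ∑ t ∈ Finset.Icc 1 T, lamSeq t ω j)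
      = (fun j => (1/(T:ℝ)) * ∑ t ∈ Finset.Icc 1 T,
          G (t-1) (ext (fun k : Fin T => ξ ((k:ℕ)+2) ω)) j) := by
    intro ω
    funext j
    congr 1
    apply Finset.sum_congr rfl
    intro t ht
    rw [Finset.mem_Icc] at ht
    obtain ⟨s, rfl⟩ : ∃ s, t = s+1 := ⟨t-1, by omega⟩
    simp only [Nat.add_sub_cancel]
    rw [hrep s ω]
    refine congrFun (hGdep s _ _ ?_) j
    intro k hk
    have hkT : k < T := by omega
    rw [hext]
    simp only [hkT, dif_pos]
  have hlaw := aux_law μ N hN ξ hξmeas hξindep hξunif T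
    (fun v => q (fun j => (1/(T:ℝ)) * ∑ t ∈ Finset.Icc 1 T, G (t-1) (ext v) j))
  have hNT1 : (1/(N:ℝ))^T * (N:ℝ)^T = 1 := by
    rw [one_div, inv_pow, inv_mul_cancel₀ (by positivity)]
  have hTT : Real.sqrt T * Real.sqrt T = (T:ℝ) := Real.mul_self_sqrt hT'.le
  calc (∫ ω, q (fun j => (1 / (T : ℝ)) * ∑ t ∈ Finset.Icc 1 T, lamSeq t ω j) ∂μ)
      = (1/(N:ℝ))^T * ∑ v : Fin T → Fin N,
          q (fun j => (1/(T:ℝ)) * ∑ t ∈ Finset.Icc 1 T, G (t-1) (ext v) j) := by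
        rw [← hlaw]
        exact integral_congr_ae (Filter.Eventually.of_forall fun ω => congrArg q (hintrep ω))
    _ ≤ (1/(N:ℝ))^T * ∑ v : Fin T → Fin N,
          ((1/(T:ℝ)) * ∑ t ∈ Finset.Icc 1 T, q (G (t-1) (ext v))) :=
        mul_le_mul_of_nonneg_left (Finset.sum_le_sum fun v _ => hjensen v) (by positivity)
    _ = (1/(N:ℝ))^T * (1/(T:ℝ)) * (∑ t ∈ Finset.Icc 1 T, ∑ v : Fin T → Fin N,
          q (G (t-1) (ext v))) := by
        rw [← Finset.mul_sum, Finset.sum_comm]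
        ring
    _ ≤ (1/(N:ℝ))^T * (1/(T:ℝ)) * ((N:ℝ)^T * ((T:ℝ) * q lamOpt + D * Real.sqrt T)) :=
        mul_le_mul_of_nonneg_left htotal (by positivity)
    _ = q lamOpt + D / Real.sqrt T := by
        have h1 : (1/(N:ℝ))^T * (1/(T:ℝ)) * ((N:ℝ)^T * ((T:ℝ) * q lamOpt + D * Real.sqrt T))
            = ((1/(N:ℝ))^T * (N:ℝ)^T) * (((T:ℝ) * q lamOpt + D * Real.sqrt T) / T) := by
          ring
        have h4 : D / Real.sqrt T * (T:ℝ) = D * Real.sqrt T := by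
          rw [div_mul_eq_mul_div, eq_comm, eq_div_iff (ne_of_gt hsT)]
          linear_combination D * hTT
        have h3 : ((T:ℝ) * q lamOpt + D * Real.sqrt T) / T = q lamOpt + D / Real.sqrt T := by
          rw [div_eq_iff (ne_of_gt hT'), add_mul, h4]
          ring
        rw [h1, hNT1, one_mul, h3]
    _ ≤ q lamStar + D / Real.sqrt T := by linarith
end
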